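/- arXiv:math/0703931 — 7 statements merged into one kernel-verified Lean document; each statement's English description precedes it below -/
import Mathlib

section
/- Suppose for each λ ∈ ]a,b[ the function J + λΦ has sequentially compact sub-level sets and a unique global minimum ŷ_λ. Then the map λ ↦ ŷ_λ is sequentially continuous on ]a,b[. -/
/-!
Write `F t = J + t • Φ`. Comparing the minimality of `y s` and `y t` gives
`(t - s) (Φ (y t) - Φ (y s)) ≤ 0`, so `Φ ∘ y` is antitone, hence locally bounded. Minimality of
`y t` then yields `F l (y t) ≤ F l z + (t - l) (Φ z - Φ (y t))`, so
`limsup_{t → l} F l (y t) ≤ inf F l`.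
Thus for `u n → l` the points `y (u n)` eventually lie in a sublevel set of `F l`; every subsequence
has a further subsequence converging to some `p`, and lower semicontinuity of `F l` (its sublevel
sets are sequentially closed, being sequentially compact in a Hausdorff space) makes `p` a minimizer
of `F l`, i.e. `p = y l` by uniqueness.
-/

open Filter Topology Set

section SequentialClosedness

variable {X : Type*} [TopologicalSpace X]

theorem IsSeqCompact.isSeqClosed [T2Space X] {s : Set X} (hs : IsSeqCompact s) :
    IsSeqClosed s := fun _ p hx hp => by
  obtain ⟨q, hq, φ, hφ, hxq⟩ := hs hx
  exact tendsto_nhds_unique hxq (hp.comp hφ.tendsto_atTop) ▸ hq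

theorem IsSeqClosed.mem_of_eventually_mem {s : Set X} (hs : IsSeqClosed s) {x : ℕ → X} {p : X}
    (hx : ∀ᶠ n in atTop, x n ∈ s) (hp : Tendsto x atTop (𝓝 p)) : p ∈ s := by
  obtain ⟨N, hN⟩ := eventually_atTop.1 hx
  exact hs (fun n => hN (n + N) (Nat.le_add_left N n)) (hp.comp (tendsto_add_atTop_nat N))

theorem le_of_tendsto_of_isSeqClosed_sublevel {f : X → ℝ} (hf : ∀ r, IsSeqClosed {x | f x ≤ r})
    {x : ℕ → X} {p : X} (hp : Tendsto x atTop (𝓝 p)) {c : ℝ}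
    (hc : ∀ ε > 0, ∀ᶠ n in atTop, f (x n) ≤ c + ε) : f p ≤ c :=
  le_of_forall_pos_le_add fun ε hε => (hf (c + ε)).mem_of_eventually_mem (hc ε hε) hp

end SequentialClosedness

theorem AntitoneOn.isBoundedUnder_abs_nhds {α : Type*} [TopologicalSpace α] [LinearOrder α]
    [OrderTopology α] {f : α → ℝ} {s : Set α} (hf : AntitoneOn f s) {l : α} (hs : s ∈ 𝓝 l) :
    IsBoundedUnder (· ≤ ·) (𝓝 l) (fun t => |f t|) := by
  obtain ⟨m₁, m₂, hl, hnhds, hsub⟩ := exists_Icc_mem_subset_of_mem_nhds hs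
  refine isBoundedUnder_of_eventually_le (a := max |f m₂| |f m₁|) ?_
  filter_upwards [hnhds] with t ht
  exact abs_le_max_abs_abs (hf (hsub ht) (hsub ⟨hl.1.trans hl.2, le_rfl⟩) ht.2)
    (hf (hsub ⟨le_rfl, hl.1.trans hl.2⟩) (hsub ht) ht.1)

section Minimizers

variable {X : Type*} {J Φ : X → ℝ} {y : ℝ → X}

theorem antitoneOn_comp_of_isMin {s : Set ℝ}
    (hmin : ∀ t ∈ s, ∀ z, J (y t) + t * Φ (y t) ≤ J z + t * Φ z) : AntitoneOn (Φ ∘ y) s := by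
  intro s₁ hs₁ s₂ hs₂ h
  rcases h.eq_or_lt with rfl | hlt
  · exact le_rfl
  · have key : (s₂ - s₁) * (Φ (y s₂) - Φ (y s₁)) ≤ 0 := by
      linarith [hmin s₁ hs₁ (y s₂), hmin s₂ hs₂ (y s₁)]
    exact sub_nonpos.1 (nonpos_of_mul_nonpos_right key (sub_pos.2 hlt))

theorem eventually_le_add_of_isMin {l : ℝ}
    (hmin : ∀ᶠ t in 𝓝 l, ∀ z, J (y t) + t * Φ (y t) ≤ J z + t * Φ z)
    (hbdd : IsBoundedUnder (· ≤ ·) (𝓝 l) (fun t => |Φ (y t)|)) (z : X) {ε : ℝ} (hε : 0 < ε) :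
    ∀ᶠ t in 𝓝 l, J (y t) + l * Φ (y t) ≤ J z + l * Φ z + ε := by
  obtain ⟨B, hB⟩ := hbdd
  have hgap : Tendsto (fun t => (t - l) * (Φ z - Φ (y t))) (𝓝 l) (𝓝 0) := by
    refine Tendsto.zero_mul_isBoundedUnder_le ?_
      (isBoundedUnder_of_eventually_le (a := |Φ z| + B) ?_)
    · simpa using (tendsto_id (x := 𝓝 l)).sub_const l
    · filter_upwards [hB] with t ht
      exact (abs_sub _ _).trans (add_le_add_right ht _)
  filter_upwards [hmin, hgap.eventually (ge_mem_nhds hε)] with t ht hgapt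
  linarith [ht z]

end Minimizers

theorem stmt_5_general {X : Type*} [TopologicalSpace X] [T2Space X]
    (J Φ : X → ℝ) (a b : EReal) (y : ℝ → X)
    (hcpt : ∀ l : ℝ, a < (l : EReal) → (l : EReal) < b →
      ∀ r : ℝ, IsSeqCompact {x : X | J x + l * Φ x ≤ r})
    (hmin : ∀ l : ℝ, a < (l : EReal) → (l : EReal) < b →
      ∀ x : X, J (y l) + l * Φ (y l) ≤ J x + l * Φ x)
    (huniq : ∀ l : ℝ, a < (l : EReal) → (l : EReal) < b →
      ∀ x : X, (∀ z : X, J x + l * Φ x ≤ J z + l * Φ z) → x = y l) :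
    ∀ l : ℝ, a < (l : EReal) → (l : EReal) < b →
      ∀ u : ℕ → ℝ, (∀ n, a < (u n : EReal) ∧ (u n : EReal) < b) →
        Tendsto u atTop (𝓝 l) → Tendsto (fun n => y (u n)) atTop (𝓝 (y l)) := by
  intro l hla hlb u _ hul
  set D : Set ℝ := {t | a < (t : EReal) ∧ (t : EReal) < b}
  have hD : D ∈ 𝓝 l :=
    continuous_coe_real_ereal.continuousAt.preimage_mem_nhds (Ioo_mem_nhds hla hlb)
  have hminD : ∀ t ∈ D, ∀ z, J (y t) + t * Φ (y t) ≤ J z + t * Φ z :=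
    fun t ht => hmin t ht.1 ht.2
  have hbdd := (antitoneOn_comp_of_isMin hminD).isBoundedUnder_abs_nhds hD
  have hlimsup := fun z ε (hε : 0 < ε) =>
    eventually_le_add_of_isMin (eventually_of_mem hD hminD) hbdd z hε
  refine tendsto_of_subseq_tendsto fun ns hns => ?_
  have hv : Tendsto (u ∘ ns) atTop (𝓝 l) := hul.comp hns
  obtain ⟨p, -, φ, hφ, hp⟩ := (hcpt l hla hlb _).subseq_of_frequently_in
    (hv.eventually (hlimsup (y l) 1 one_pos)).frequently
  have hpmin : ∀ z, J p + l * Φ p ≤ J z + l * Φ z := fun z =>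
    le_of_tendsto_of_isSeqClosed_sublevel (fun r => (hcpt l hla hlb r).isSeqClosed) hp
      fun ε hε => (hv.comp hφ.tendsto_atTop).eventually (hlimsup z ε hε)
  exact ⟨φ, huniq l hla hlb p hpmin ▸ hp⟩

/-- If for each `λ ∈ ]a,b[` the function `J + λΦ` has sequentially compact sub-level sets
and a unique global minimum `y λ`, then `λ ↦ y λ` is sequentially continuous on `]a,b[`. -/
theorem stmt_5 {X : Type*} [TopologicalSpace X] [T2Space X] [Nonempty X]
    (J Φ : X → ℝ) (a b : EReal) (hab : a < b) (y : ℝ → X)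
    (hcpt : ∀ l : ℝ, a < (l : EReal) → (l : EReal) < b →
      ∀ r : ℝ, IsSeqCompact {x : X | J x + l * Φ x ≤ r})
    (hmin : ∀ l : ℝ, a < (l : EReal) → (l : EReal) < b →
      ∀ x : X, J (y l) + l * Φ (y l) ≤ J x + l * Φ x)
    (huniq : ∀ l : ℝ, a < (l : EReal) → (l : EReal) < b →
      ∀ x : X, (∀ z : X, J x + l * Φ x ≤ J z + l * Φ z) → x = y l) :
    ∀ l : ℝ, a < (l : EReal) → (l : EReal) < b →
      ∀ u : ℕ → ℝ, (∀ n, a < (u n : EReal) ∧ (u n : EReal) < b) →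
        Tendsto u atTop (𝓝 l) → Tendsto (fun n => y (u n)) atTop (𝓝 (y l)) :=
  stmt_5_general J Φ a b y hcpt hmin huniq
end

section
/- Suppose x̂ is the unique global minimum of g := J + λ̂Φ, the sub-level sets of g are sequentially compact, and Φ(x̂) = r. Then every sequence {x_n} in Φ⁻¹(r) with J(x_n) → inf_{Φ⁻¹(r)} J converges to x̂; i.e., the problem of minimizing J over Φ⁻¹(r) is well-posed. -/
open Filter Topology

private lemma mem_of_seqCompact_limit {X : Type*} [TopologicalSpace X] [T2Space X]
    {S : Set X} (hS : IsSeqCompact S) {v : ℕ → X} (hv : ∀ n, v n ∈ S) {y : X}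
    (h : Tendsto v atTop (𝓝 y)) : y ∈ S := by
  obtain ⟨z, hz, ψ, hψ, hlim⟩ := hS hv
  have h2 : Tendsto (v ∘ ψ) atTop (𝓝 y) := h.comp hψ.tendsto_atTop
  exact tendsto_nhds_unique h2 hlim ▸ hz

/-- If `x̂` is the unique global minimum of `g = J + λ̂Φ`, the sub-level sets of `g` are
sequentially compact, and `Φ x̂ = r`, then every minimizing sequence for `J` over
`Φ⁻¹(r)` converges to `x̂`: the problem of minimizing `J` over `Φ⁻¹(r)` is well-posed. -/
theorem stmt_8 {X : Type*} [TopologicalSpace X] [T2Space X] (J Φ : X → ℝ) (lh r : ℝ)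
    (xh : X)
    (hcpt : ∀ s : ℝ, IsSeqCompact {x : X | J x + lh * Φ x ≤ s})
    (hmin : ∀ x : X, J xh + lh * Φ xh ≤ J x + lh * Φ x)
    (huniq : ∀ x : X, (∀ z : X, J x + lh * Φ x ≤ J z + lh * Φ z) → x = xh)
    (hr : Φ xh = r) :
    ∀ u : ℕ → X, (∀ n, Φ (u n) = r) →
      Tendsto (fun n => J (u n)) atTop (𝓝 (⨅ z : {x : X // Φ x = r}, J z.1)) →
      Tendsto u atTop (𝓝 xh) := by
  intro u huΦ hJu
  set g : X → ℝ := fun x => J x + lh * Φ x with hg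
  -- the infimum equals J xh
  have hle : ∀ z : {x : X // Φ x = r}, J xh ≤ J z.1 := by
    intro z
    have h1 := hmin z.1
    have h2 := z.2
    simp only [hr] at h1
    rw [h2] at h1
    linarith
  haveI : Nonempty {x : X // Φ x = r} := ⟨⟨xh, hr⟩⟩
  have hinf : (⨅ z : {x : X // Φ x = r}, J z.1) = J xh := by
    apply le_antisymm
    · exact ciInf_le ⟨J xh, by rintro x ⟨z, rfl⟩; exact hle z⟩ (⟨xh, hr⟩ : {x : X // Φ x = r})
    · exact le_ciInf hle
  rw [hinf] at hJu
  -- g ∘ u tends to g xh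
  have hgu : Tendsto (fun n => g (u n)) atTop (𝓝 (g xh)) := by
    have : Tendsto (fun n => J (u n) + lh * r) atTop (𝓝 (J xh + lh * r)) :=
      hJu.add_const _
    simpa [hg, huΦ, hr] using this
  -- by contradiction
  by_contra hcon
  rw [tendsto_nhds] at hcon
  push_neg at hcon
  obtain ⟨V, hVopen, hxhV, hV⟩ := hcon
  have hV' : ∃ᶠ n in atTop, u n ∉ V := not_eventually.mp hV
  obtain ⟨φ, hφmono, hφ⟩ := Filter.extraction_of_frequently_atTop hV'
  have hgsub : Tendsto (fun n => g (u (φ n))) atTop (𝓝 (g xh)) :=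
    hgu.comp hφmono.tendsto_atTop
  -- tail in sublevel set g ≤ g xh + 1
  have hev : ∀ᶠ n in atTop, g (u (φ n)) ≤ g xh + 1 := by
    filter_upwards [hgsub.eventually (eventually_le_nhds (by linarith : g xh < g xh + 1))]
      with n hn using hn
  obtain ⟨N, hN⟩ := hev.exists_forall_of_atTop
  set w : ℕ → X := fun n => u (φ (n + N)) with hw
  have hwS : ∀ n, w n ∈ {x : X | g x ≤ g xh + 1} := fun n =>
    hN (n + N) (Nat.le_add_left N n)
  obtain ⟨y, hyS, ψ, hψmono, hψlim⟩ := hcpt (g xh + 1) hwS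
  have hgw : Tendsto (fun n => g (w (ψ n))) atTop (𝓝 (g xh)) := by
    have h1 : Tendsto (fun n => g (u (φ (n + N)))) atTop (𝓝 (g xh)) :=
      hgsub.comp (tendsto_add_atTop_nat N)
    exact h1.comp hψmono.tendsto_atTop
  -- g y ≤ g xh
  have hgy : g y ≤ g xh := by
    refine le_of_forall_pos_le_add fun ε hε => ?_
    have hev2 : ∀ᶠ n in atTop, g (w (ψ n)) ≤ g xh + ε := by
      filter_upwards [hgw.eventually (eventually_le_nhds (by linarith : g xh < g xh + ε))]
        with n hn using hn
    obtain ⟨M, hM⟩ := hev2.exists_forall_of_atTop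
    have hmem : ∀ n, w (ψ (n + M)) ∈ {x : X | g x ≤ g xh + ε} := fun n =>
      hM (n + M) (Nat.le_add_left M n)
    have hlim2 : Tendsto (fun n => w (ψ (n + M))) atTop (𝓝 y) :=
      hψlim.comp (tendsto_add_atTop_nat M)
    exact mem_of_seqCompact_limit (hcpt (g xh + ε)) hmem hlim2
  have hymin : ∀ z : X, g y ≤ g z := fun z => le_trans hgy (hmin z)
  have hyx : y = xh := huniq y hymin
  -- but y is a limit of points outside V
  have hyVc : y ∈ Vᶜ := by
    have hclosed : IsClosed Vᶜ := hVopen.isClosed_compl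
    refine hclosed.mem_of_tendsto hψlim ?_
    filter_upwards with n
    exact hφ (ψ n + N)
  exact hyVc (hyx ▸ hxhV)
end

section
/- Let I ⊆ ℝ be an interval, f : X × I → ℝ, ρ* > sup_{λ∈I} inf_{x∈X} f(x,λ), and λ̂ ∈ I. Assume for each ρ ≤ ρ*: (i) for each x ∈ X the set {λ ∈ I : f(x,λ) > ρ} is an interval (connected); (ii) for each λ ∈ I the set {x : f(x,λ) ≤ ρ} is sequentially closed, and sequentially compact for λ = λ̂; (iii) for each compact interval T ⊆ I with sup_T inf_X f < ρ there is a continuous φ : T → X with f(φ(λ),λ) < ρ for all λ ∈ T. Then sup_{λ∈I} inf_{x∈X} f(x,λ) = inf_{x∈X} sup_{λ∈I} f(x,λ). -/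
open Filter Topology

/-- running maximum of a sequence -/
private noncomputable def runMax (u : ℕ → ℝ) : ℕ → ℝ
  | 0 => u 0
  | n + 1 => max (runMax u n) (u (n + 1))

private lemma le_runMax (u : ℕ → ℝ) (n : ℕ) : u n ≤ runMax u n := by
  cases n with
  | zero => exact le_refl _
  | succ n => exact le_max_right _ _

private lemma runMax_mono (u : ℕ → ℝ) : Monotone (runMax u) :=
  monotone_nat_of_le_succ fun n => le_max_left _ _

private lemma runMax_mem (u : ℕ → ℝ) (I : Set ℝ) (hu : ∀ n, u n ∈ I) (n : ℕ) :
    runMax u n ∈ I := by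
  induction n with
  | zero => exact hu 0
  | succ n ih =>
      rcases max_cases (runMax u n) (u (n + 1)) with ⟨h, _⟩ | ⟨h, _⟩ <;>
        simp only [runMax, h] <;> [exact ih; exact hu (n + 1)]

/-- A countable cofinal family in any nonempty set of reals. -/
private lemma exists_cofinal_seq (I : Set ℝ) (hne : I.Nonempty) :
    ∃ u : ℕ → ℝ, (∀ n, u n ∈ I) ∧ ∀ l ∈ I, ∃ n, l ≤ u n := by
  by_cases h : ∃ m ∈ I, ∀ l ∈ I, l ≤ m
  · obtain ⟨m, hm, hmax⟩ := h
    exact ⟨fun _ => m, fun _ => hm, fun l hl => ⟨0, hmax l hl⟩⟩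
  · push_neg at h
    have key : ∀ r : ℚ, ∃ y ∈ I, (∃ z ∈ I, (r : ℝ) ≤ z) → (r : ℝ) ≤ y := by
      intro r
      by_cases hr : ∃ z ∈ I, (r : ℝ) ≤ z
      · obtain ⟨z, hz, hrz⟩ := hr
        exact ⟨z, hz, fun _ => hrz⟩
      · exact ⟨hne.choose, hne.choose_spec, fun h' => absurd h' hr⟩
    choose y hyI hy using key
    obtain ⟨e⟩ : Nonempty (ℕ ≃ ℚ) := ⟨(Denumerable.eqv ℚ).symm⟩
    refine ⟨fun n => y (e n), fun n => hyI _, fun l hl => ?_⟩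
    obtain ⟨l', hl', hll'⟩ := h l hl
    obtain ⟨r, hlr, hrl'⟩ := exists_rat_btwn hll'
    refine ⟨e.symm r, ?_⟩
    have : (r : ℝ) ≤ y r := hy r ⟨l', hl', hrl'.le⟩
    simpa using hlr.le.trans this

private lemma exists_coinitial_seq (I : Set ℝ) (hne : I.Nonempty) :
    ∃ v : ℕ → ℝ, (∀ n, v n ∈ I) ∧ ∀ l ∈ I, ∃ n, v n ≤ l := by
  obtain ⟨u, huJ, hucof⟩ := exists_cofinal_seq ((fun x : ℝ => -x) '' I)
    (hne.image _)
  refine ⟨fun n => -(u n), fun n => ?_, fun l hl => ?_⟩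
  · obtain ⟨z, hz, hzu⟩ := huJ n
    simpa [← hzu] using hz
  · obtain ⟨n, hn⟩ := hucof (-l) ⟨l, hl, rfl⟩
    refine ⟨n, ?_⟩
    simp only
    linarith

/-- Core single-interval claim: a continuous selection `φ` on `[c,d]` with
`f (φ l) l < q` must have a point whose value function is `≤ p` on all of `[c,d]`. -/
private lemma core_claim {X : Type*} [TopologicalSpace X]
    (f : X → ℝ → ℝ) (I : Set ℝ) (p q : ℝ) (hqp : q < p)
    (h1 : ∀ x : X, {l : ℝ | l ∈ I ∧ q < f x l}.OrdConnected)
    (h2 : ∀ l ∈ I, IsSeqClosed {x : X | f x l ≤ p})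
    (c d : ℝ) (hcd : c ≤ d) (hsub : Set.Icc c d ⊆ I)
    (φ : ℝ → X) (hφ : ContinuousOn φ (Set.Icc c d))
    (hfφ : ∀ l ∈ Set.Icc c d, f (φ l) l < q) :
    ∃ l₀ ∈ Set.Icc c d, ∀ l ∈ Set.Icc c d, f (φ l₀) l ≤ p := by
  by_contra hcon
  push_neg at hcon
  set T : Set ℝ := Set.Icc c d with hT
  haveI : PreconnectedSpace T := Subtype.preconnectedSpace isPreconnected_Icc
  have hgc : Continuous (fun l : T => φ (l : ℝ)) := hφ.restrict
  -- the "right" and "left" sets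
  set S : Set T := {l | ∃ μ : T, (l : ℝ) < (μ : ℝ) ∧ p < f (φ (l : ℝ)) (μ : ℝ)} with hS
  set L : Set T := {l | ∃ μ : T, (μ : ℝ) < (l : ℝ) ∧ p < f (φ (l : ℝ)) (μ : ℝ)} with hL
  have hcover : ∀ l : T, l ∈ S ∪ L := by
    intro l
    obtain ⟨μ, hμT, hpμ⟩ := hcon l.1 l.2
    rcases lt_trichotomy (l : ℝ) μ with h | h | h
    · exact Or.inl ⟨⟨μ, hμT⟩, h, hpμ⟩
    · exfalso
      rw [← h] at hpμ
      exact absurd hpμ (not_lt.2 (le_of_lt ((hfφ l.1 l.2).trans hqp)))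
    · exact Or.inr ⟨⟨μ, hμT⟩, h, hpμ⟩
  have hdisj : ∀ l : T, l ∈ S → l ∈ L → False := by
    rintro l ⟨μ₂, hμ₂, hp₂⟩ ⟨μ₁, hμ₁, hp₁⟩
    have hmem₁ : (μ₁ : ℝ) ∈ {l' : ℝ | l' ∈ I ∧ q < f (φ (l : ℝ)) l'} :=
      ⟨hsub μ₁.2, hqp.trans hp₁⟩
    have hmem₂ : (μ₂ : ℝ) ∈ {l' : ℝ | l' ∈ I ∧ q < f (φ (l : ℝ)) l'} :=
      ⟨hsub μ₂.2, hqp.trans hp₂⟩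
    have := (h1 (φ (l : ℝ))).out hmem₁ hmem₂ ⟨hμ₁.le, hμ₂.le⟩
    exact absurd this.2 (not_lt.2 (hfφ l.1 l.2).le)
  -- closedness of the sublevel preimages
  have hclosed : ∀ μ : T, IsClosed {l : T | f (φ (l : ℝ)) (μ : ℝ) ≤ p} := by
    intro μ
    have : IsSeqClosed ((fun l : T => φ (l : ℝ)) ⁻¹' {x : X | f x (μ : ℝ) ≤ p}) :=
      (h2 (μ : ℝ) (hsub μ.2)).preimage hgc.seqContinuous
    exact this.isClosed
  have hSopen : IsOpen S := by
    have : S = ⋃ μ : T, ({l : T | (l : ℝ) < (μ : ℝ)} ∩ {l : T | f (φ (l : ℝ)) (μ : ℝ) ≤ p}ᶜ) := by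
      ext l
      simp only [hS, Set.mem_setOf_eq, Set.mem_iUnion, Set.mem_inter_iff, Set.mem_compl_iff,
        not_le]
    rw [this]
    refine isOpen_iUnion fun μ => (IsOpen.inter ?_ (hclosed μ).isOpen_compl)
    exact isOpen_Iio.preimage continuous_subtype_val
  have hLopen : IsOpen L := by
    have : L = ⋃ μ : T, ({l : T | (μ : ℝ) < (l : ℝ)} ∩ {l : T | f (φ (l : ℝ)) (μ : ℝ) ≤ p}ᶜ) := by
      ext l
      simp only [hL, Set.mem_setOf_eq, Set.mem_iUnion, Set.mem_inter_iff, Set.mem_compl_iff,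
        not_le]
    rw [this]
    refine isOpen_iUnion fun μ => (IsOpen.inter ?_ (hclosed μ).isOpen_compl)
    exact isOpen_Ioi.preimage continuous_subtype_val
  have hScompl : Sᶜ = L := by
    ext l
    constructor
    · intro hl
      rcases hcover l with h | h
      · exact absurd h hl
      · exact h
    · intro hl hS'
      exact hdisj l hS' hl
  have hclopen : IsClopen S := ⟨by rw [← isOpen_compl_iff, hScompl]; exact hLopen, hSopen⟩
  have hc' : (⟨c, le_refl c, hcd⟩ : T) ∈ S := by
    rcases hcover ⟨c, le_refl c, hcd⟩ with h | h
    · exact h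
    · obtain ⟨μ, hμ, _⟩ := h
      exact absurd hμ (not_lt.2 μ.2.1)
  have hd' : (⟨d, hcd, le_refl d⟩ : T) ∉ S := by
    rintro ⟨μ, hμ, _⟩
    exact absurd hμ (not_lt.2 μ.2.2)
  rcases isClopen_iff.mp hclopen with h | h
  · rw [h] at hc'; exact hc'
  · rw [h] at hd'; exact hd' (Set.mem_univ _)

/-- Theorem 2 (minimax theorem). -/
theorem stmt_10 {X : Type*} [TopologicalSpace X] [T2Space X] [Nonempty X]
    (I : Set ℝ) (hI : I.OrdConnected) (f : X → ℝ → ℝ) (rho : ℝ) (lh : ℝ) (hlh : lh ∈ I)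
    (hrho : (⨆ l : I, ⨅ x : X, ((f x l.1 : ℝ) : EReal)) < (rho : EReal))
    (h1 : ∀ p : ℝ, p ≤ rho → ∀ x : X, {l : ℝ | l ∈ I ∧ p < f x l}.OrdConnected)
    (h2 : ∀ p : ℝ, p ≤ rho → ∀ l ∈ I, IsSeqClosed {x : X | f x l ≤ p})
    (h2' : ∀ p : ℝ, p ≤ rho → IsSeqCompact {x : X | f x lh ≤ p})
    (h3 : ∀ p : ℝ, p ≤ rho → ∀ c d : ℝ, c ≤ d → Set.Icc c d ⊆ I →
      (⨆ l : Set.Icc c d, ⨅ x : X, ((f x l.1 : ℝ) : EReal)) < (p : EReal) →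
      ∃ φ : ℝ → X, ContinuousOn φ (Set.Icc c d) ∧ ∀ l ∈ Set.Icc c d, f (φ l) l < p) :
    (⨆ l : I, ⨅ x : X, ((f x l.1 : ℝ) : EReal)) =
      ⨅ x : X, ⨆ l : I, ((f x l.1 : ℝ) : EReal) := by
  set A := (⨆ l : I, ⨅ x : X, ((f x l.1 : ℝ) : EReal)) with hA
  set B := (⨅ x : X, ⨆ l : I, ((f x l.1 : ℝ) : EReal)) with hB
  have key : ∀ p : ℝ, A < (p : EReal) → p ≤ rho → B ≤ (p : EReal) := by
    intro p hAp hp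
    obtain ⟨q, hAq, hqp⟩ := EReal.exists_between_coe_real hAp
    have hqrho : q ≤ rho := le_of_lt (lt_of_lt_of_le (EReal.coe_lt_coe_iff.mp hqp) hp)
    -- it suffices to find a single point dominated by p on all of I
    suffices hex : ∃ x : X, ∀ l ∈ I, f x l ≤ p by
      obtain ⟨x, hx⟩ := hex
      refine (iInf_le _ x).trans (iSup_le fun l => ?_)
      exact EReal.coe_le_coe_iff.2 (hx l.1 l.2)
    -- countable exhaustion of I by closed intervals
    obtain ⟨u, huI, hucof⟩ := exists_cofinal_seq I ⟨lh, hlh⟩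
    obtain ⟨v, hvI, hvcoi⟩ := exists_coinitial_seq I ⟨lh, hlh⟩
    set U : ℕ → ℝ := runMax u with hU
    set V : ℕ → ℝ := fun n => -(runMax (fun k => -(v k)) n) with hV
    have hUI : ∀ n, U n ∈ I := runMax_mem u I huI
    have hVI : ∀ n, V n ∈ I := by
      intro n
      have := runMax_mem (fun k => -(v k)) ((fun x : ℝ => -x) '' I)
        (fun k => ⟨v k, hvI k, rfl⟩) n
      obtain ⟨z, hz, hzn⟩ := this
      have : V n = z := by simp [hV, ← hzn]
      rwa [this]
    have hUcof : ∀ l ∈ I, ∃ n, l ≤ U n := by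
      intro l hl
      obtain ⟨n, hn⟩ := hucof l hl
      exact ⟨n, hn.trans (le_runMax u n)⟩
    have hVcoi : ∀ l ∈ I, ∃ n, V n ≤ l := by
      intro l hl
      obtain ⟨n, hn⟩ := hvcoi l hl
      have := le_runMax (fun k => -(v k)) n
      exact ⟨n, by simp only [hV]; linarith⟩
    have hUmono : Monotone U := runMax_mono u
    have hVanti : Antitone V := fun m n hmn => by
      have := runMax_mono (fun k => -(v k)) hmn
      simp only [hV]; linarith
    set c : ℕ → ℝ := fun n => min (V n) lh with hc
    set d : ℕ → ℝ := fun n => max (U n) lh with hd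
    have hcd : ∀ n, c n ≤ d n := fun n => (min_le_right _ _).trans (le_max_right _ _)
    have hcI : ∀ n, c n ∈ I := by
      intro n
      rcases min_cases (V n) lh with ⟨h, _⟩ | ⟨h, _⟩ <;> rw [hc] <;> simp only [h] <;>
        [exact hVI n; exact hlh]
    have hdI : ∀ n, d n ∈ I := by
      intro n
      rcases max_cases (U n) lh with ⟨h, _⟩ | ⟨h, _⟩ <;> rw [hd] <;> simp only [h] <;>
        [exact hUI n; exact hlh]
    have hsub : ∀ n, Set.Icc (c n) (d n) ⊆ I := fun n => hI.out (hcI n) (hdI n)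
    have hlhmem : ∀ n, lh ∈ Set.Icc (c n) (d n) :=
      fun n => ⟨min_le_right _ _, le_max_right _ _⟩
    -- for each n, choose a good point
    have hsel : ∀ n, ∃ x : X, ∀ l ∈ Set.Icc (c n) (d n), f x l ≤ p := by
      intro n
      have hsup : (⨆ l : Set.Icc (c n) (d n), ⨅ x : X, ((f x l.1 : ℝ) : EReal))
          < (q : EReal) := by
        refine lt_of_le_of_lt (iSup_le fun l => ?_) hAq
        exact le_iSup (fun l : I => ⨅ x : X, ((f x l.1 : ℝ) : EReal)) ⟨l.1, hsub n l.2⟩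
      obtain ⟨φ, hφc, hφlt⟩ := h3 q hqrho (c n) (d n) (hcd n) (hsub n) hsup
      obtain ⟨l₀, _, hl₀⟩ := core_claim f I p q (EReal.coe_lt_coe_iff.mp hqp)
        (h1 q hqrho) (h2 p hp) (c n) (d n) (hcd n) (hsub n) φ hφc hφlt
      exact ⟨φ l₀, hl₀⟩
    choose x hx using hsel
    have hxK : ∀ n, x n ∈ {x : X | f x lh ≤ p} := fun n => hx n lh (hlhmem n)
    obtain ⟨a, _, σ, hσ, hconv⟩ := h2' p hp hxK
    refine ⟨a, fun l hl => ?_⟩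
    obtain ⟨n₁, hn₁⟩ := hUcof l hl
    obtain ⟨n₂, hn₂⟩ := hVcoi l hl
    set N := max n₁ n₂ with hN
    have hmem : ∀ k, f ((x ∘ σ) (k + N)) l ≤ p := by
      intro k
      have hσN : N ≤ σ (k + N) := le_trans (le_add_self) (hσ.le_apply)
      have hlc : c (σ (k + N)) ≤ l :=
        (min_le_left _ _).trans ((hVanti (le_trans (le_max_right n₁ n₂) hσN)).trans hn₂)
      have hld : l ≤ d (σ (k + N)) :=
        (hn₁.trans (hUmono (le_trans (le_max_left n₁ n₂) hσN))).trans (le_max_left _ _)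
      exact hx (σ (k + N)) l ⟨hlc, hld⟩
    have htend : Tendsto (fun k => (x ∘ σ) (k + N)) atTop (𝓝 a) :=
      hconv.comp (tendsto_add_atTop_nat N)
    exact (h2 p hp l hl) hmem htend
  -- combine
  refine le_antisymm ?_ ?_
  · exact iSup_iInf_le_iInf_iSup fun (l : I) (x : X) => ((f x l.1 : ℝ) : EReal)
  · by_contra hlt
    push_neg at hlt
    have hAB : A < min B (rho : EReal) := lt_min hlt hrho
    obtain ⟨p, hAp, hpB⟩ := EReal.exists_between_coe_real hAB
    have hp : p ≤ rho := le_of_lt (EReal.coe_lt_coe_iff.mp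
      (lt_of_lt_of_le hpB (min_le_right _ _)))
    have := key p hAp hp
    exact absurd this (not_le.2 (lt_of_lt_of_le hpB (min_le_left _ _)))
end

section
/- Suppose α < β, and for each λ ∈ ]a,b[ the function J + λΦ has sequentially compact sub-level sets and a unique global minimum. Then for each r ∈ ]α,β[ there exists λ̂ ∈ ]a,b[ such that the unique global minimum of J + λ̂Φ lies in Φ⁻¹(r). -/
open Filter Topology

lemma aux_closed {X : Type*} [TopologicalSpace X] [T2Space X] {S : Set X}
    (hS : IsSeqCompact S) {x : ℕ → X} {x₀ : X} (hx : Tendsto x atTop (𝓝 x₀))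
    (hmem : ∀ᶠ n in atTop, x n ∈ S) : x₀ ∈ S := by
  obtain ⟨N, hN⟩ := eventually_atTop.mp hmem
  obtain ⟨y, hyS, ψ, hψ, htend⟩ := hS (x := fun k => x (k + N)) (fun k => hN _ (Nat.le_add_left _ _))
  have h2 : Tendsto (fun k => x (ψ k + N)) atTop (𝓝 x₀) :=
    hx.comp ((tendsto_add_atTop_nat N).comp hψ.tendsto_atTop)
  exact tendsto_nhds_unique h2 htend ▸ hyS

lemma aux_abs_bound {f : ℕ → ℝ} {c : ℝ} (h : Tendsto f atTop (𝓝 c)) :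
    ∃ M : ℝ, 0 ≤ M ∧ ∀ n, |f n| ≤ M := by
  obtain ⟨Q1, hQ1⟩ := h.bddAbove_range
  obtain ⟨Q2, hQ2⟩ := h.bddBelow_range
  refine ⟨|Q1| + |Q2|, by positivity, fun n => abs_le.2 ⟨?_, ?_⟩⟩
  · have := hQ2 (Set.mem_range_self n)
    have := neg_abs_le Q2
    have := abs_nonneg Q1
    linarith
  · have := hQ1 (Set.mem_range_self n)
    have := le_abs_self Q1
    have := abs_nonneg Q2
    linarith

lemma aux_master {X : Type*} [TopologicalSpace X] [T2Space X]
    (J Φ : X → ℝ) (a b : EReal)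
    (hcpt : ∀ l : ℝ, a < (l : EReal) → (l : EReal) < b →
      ∀ r : ℝ, IsSeqCompact {x : X | J x + l * Φ x ≤ r})
    (l : ℕ → ℝ) (l₀ : ℝ) (hl₀a : a < (l₀ : EReal)) (hl₀b : (l₀ : EReal) ≤ b)
    (hlt : Tendsto l atTop (𝓝 l₀))
    (x : ℕ → X) (hx : ∀ n, ∀ z, J (x n) + l n * Φ (x n) ≤ J z + l n * Φ z)
    (L : ℝ) (hL : Tendsto (fun n => Φ (x n)) atTop (𝓝 L)) :
    ∃ x₀ : X, L ≤ Φ x₀ ∧ (∀ z, J x₀ + l₀ * Φ x₀ ≤ J z + l₀ * Φ z) ∧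
      ((l₀ : EReal) < b → Φ x₀ = L) := by
  obtain ⟨Q, hQ0, hQ⟩ := aux_abs_bound hlt
  obtain ⟨M, hM0, hM⟩ := aux_abs_bound hL
  obtain ⟨p₀, hp₀a, hp₀l⟩ := EReal.lt_iff_exists_real_btwn.mp hl₀a
  have hp₀l' : p₀ < l₀ := by exact_mod_cast hp₀l
  have hp₀b : (p₀ : EReal) < b := lt_of_lt_of_le hp₀l hl₀b
  set z₀ := x 0 with hz₀
  set c₀ : ℝ := J z₀ + Q * |Φ z₀| + (|p₀| + Q) * M with hc₀
  have hmemc : ∀ n, x n ∈ {y : X | J y + p₀ * Φ y ≤ c₀} := by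
    intro n
    have h1 := hx n z₀
    have h2 := abs_le.mp (hQ n)
    have h3 := abs_le.mp (hM n)
    have h4 : l n * Φ z₀ ≤ Q * |Φ z₀| := by
      calc l n * Φ z₀ ≤ |l n * Φ z₀| := le_abs_self _
        _ = |l n| * |Φ z₀| := abs_mul _ _
        _ ≤ Q * |Φ z₀| := mul_le_mul_of_nonneg_right (hQ n) (abs_nonneg _)
    have h5 : (p₀ - l n) * Φ (x n) ≤ (|p₀| + Q) * M := by
      calc (p₀ - l n) * Φ (x n) ≤ |(p₀ - l n) * Φ (x n)| := le_abs_self _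
        _ = |p₀ - l n| * |Φ (x n)| := abs_mul _ _
        _ ≤ (|p₀| + Q) * M := by
            apply mul_le_mul _ (hM n) (abs_nonneg _) (by positivity)
            exact (abs_sub _ _).trans (by linarith [hQ n])
    simp only [Set.mem_setOf_eq]
    nlinarith
  obtain ⟨x₀, hx₀S, ψ, hψ, htend⟩ := hcpt p₀ hp₀a hp₀b c₀ hmemc
  have hlsc : ∀ p : ℝ, a < (p : EReal) → (p : EReal) < b → ∀ c : ℝ,
      (∀ᶠ n in atTop, J (x (ψ n)) + p * Φ (x (ψ n)) ≤ c) → J x₀ + p * Φ x₀ ≤ c :=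
    fun p hpa hpb c hev => aux_closed (hcpt p hpa hpb c) htend hev
  have hlψ : Tendsto (fun n => l (ψ n)) atTop (𝓝 l₀) := hlt.comp hψ.tendsto_atTop
  have hLψ : Tendsto (fun n => Φ (x (ψ n))) atTop (𝓝 L) := hL.comp hψ.tendsto_atTop
  have hkey : ∀ p : ℝ, a < (p : EReal) → (p : EReal) < b → ∀ z : X,
      J x₀ + p * Φ x₀ ≤ J z + l₀ * Φ z + (p - l₀) * L := by
    intro p hpa hpb z
    have H : ∀ ε > (0:ℝ), (J x₀ + p * Φ x₀) - ε ≤ J z + l₀ * Φ z + (p - l₀) * L := by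
      intro ε hε
      have step : J x₀ + p * Φ x₀ ≤ J z + l₀ * Φ z + (p - l₀) * L + ε := by
        apply hlsc p hpa hpb
        have htend2 : Tendsto (fun n => J z + l (ψ n) * Φ z + (p - l (ψ n)) * Φ (x (ψ n)))
            atTop (𝓝 (J z + l₀ * Φ z + (p - l₀) * L)) :=
          (tendsto_const_nhds.add (hlψ.mul tendsto_const_nhds)).add
            ((tendsto_const_nhds.sub hlψ).mul hLψ)
        have hev := htend2.eventually_le_const (lt_add_of_pos_right _ hε)
        filter_upwards [hev] with n hn
        have h1 := hx (ψ n) z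
        nlinarith
      linarith
    linarith [le_of_forall_sub_le H]
  have hgeL : L ≤ Φ x₀ := by
    have := hkey p₀ hp₀a hp₀b x₀
    nlinarith
  refine ⟨x₀, hgeL, ?_, ?_⟩
  · intro z
    have H : ∀ ε > (0:ℝ), (J x₀ + l₀ * Φ x₀) - ε ≤ J z + l₀ * Φ z := by
      intro ε hε
      obtain ⟨D, hD⟩ : ∃ D : ℝ, D = Φ x₀ - L := ⟨_, rfl⟩
      have hD0 : 0 ≤ D := by rw [hD]; linarith
      have hlt2 : (max a ((l₀ - ε / (D + 1) : ℝ) : EReal)) < (l₀ : EReal) := by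
        apply max_lt hl₀a
        have : (l₀ - ε / (D+1)) < l₀ := by
          have : 0 < ε / (D+1) := by positivity
          linarith
        exact_mod_cast this
      obtain ⟨p, hpa', hpl⟩ := EReal.lt_iff_exists_real_btwn.mp hlt2
      have hpa : a < (p : EReal) := lt_of_le_of_lt (le_max_left _ _) hpa'
      have hpd : ((l₀ - ε / (D + 1) : ℝ) : EReal) < p := lt_of_le_of_lt (le_max_right _ _) hpa'
      have hpd' : l₀ - ε / (D + 1) < p := by exact_mod_cast hpd
      have hpl' : p < l₀ := by exact_mod_cast hpl
      have hpb : (p : EReal) < b := lt_of_lt_of_le hpl hl₀b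
      have hk := hkey p hpa hpb z
      -- J x₀ + l₀ Φx₀ = (J x₀ + p Φx₀) + (l₀ - p) Φ x₀ ≤ J z + l₀ Φ z + (p-l₀) L + (l₀-p) Φ x₀
      -- (l₀ - p) * D ≤ ε since 0 ≤ l₀ - p < ε/(D+1), D ≤ D+1... need (l₀-p)*D ≤ ε
      have h7 : (l₀ - p) * D ≤ ε := by
        have h8 : l₀ - p < ε / (D + 1) := by linarith
        have h9 : (l₀ - p) * D ≤ (ε / (D+1)) * D := by nlinarith
        have h10 : (ε / (D+1)) * D ≤ ε := by
          rw [div_mul_eq_mul_div, div_le_iff₀ (by linarith)]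
          nlinarith
        linarith
      nlinarith
    linarith [le_of_forall_sub_le H]
  · intro hl₀b'
    obtain ⟨p', hp'l, hp'b⟩ := EReal.lt_iff_exists_real_btwn.mp hl₀b'
    have hp'l' : l₀ < p' := by exact_mod_cast hp'l
    have hp'a : a < (p' : EReal) := lt_trans hl₀a hp'l
    have := hkey p' hp'a hp'b x₀
    nlinarith

lemma aux_mono {X : Type*} (J Φ : X → ℝ) {l1 l2 : ℝ} (h : l1 < l2) {x1 x2 : X}
    (h1 : ∀ z, J x1 + l1 * Φ x1 ≤ J z + l1 * Φ z)
    (h2 : ∀ z, J x2 + l2 * Φ x2 ≤ J z + l2 * Φ z) :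
    Φ x2 ≤ Φ x1 := by
  have a1 := h1 x2
  have a2 := h2 x1
  nlinarith

lemma aux_key {X : Type*} [TopologicalSpace X] [T2Space X]
    (J Φ : X → ℝ) (a b : EReal) (hab : a < b)
    (hcpt : ∀ l : ℝ, a < (l : EReal) → (l : EReal) < b →
      ∀ r : ℝ, IsSeqCompact {x : X | J x + l * Φ x ≤ r})
    (hmin : ∀ l : ℝ, a < (l : EReal) → (l : EReal) < b →
      ∃! x : X, ∀ z : X, J x + l * Φ x ≤ J z + l * Φ z)
    (r : ℝ) (hy : ∃ y, Φ y < r)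
    (hMb : ∀ b' : ℝ, b = (b' : EReal) → ∀ x : X,
      (∀ z, J x + b' * Φ x ≤ J z + b' * Φ z) → Φ x < r) :
    ∃ l : ℝ, a < (l : EReal) ∧ (l : EReal) < b ∧
      ∃ x : X, (∀ z, J x + l * Φ x ≤ J z + l * Φ z) ∧ Φ x ≤ r := by
  by_contra hcon
  push_neg at hcon
  -- so every minimizer at every interior l has Φ > r
  have hgt : ∀ l : ℝ, a < (l : EReal) → (l : EReal) < b → ∀ x : X,
      (∀ z, J x + l * Φ x ≤ J z + l * Φ z) → r < Φ x := by
    intro l h1 h2 x hx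
    exact hcon l h1 h2 x hx
  obtain ⟨c, hca, hcb⟩ := EReal.lt_iff_exists_real_btwn.mp hab
  obtain ⟨xc, hxc, -⟩ := hmin c hca hcb
  induction b with
  | bot => exact absurd hcb (by simp)
  | coe b' =>
    have hcb' : c < b' := by exact_mod_cast hcb
    set l : ℕ → ℝ := fun n => b' - (b' - c) / (n + 1) with hl
    have hpos : ∀ n : ℕ, (0:ℝ) < (n:ℝ) + 1 := fun n => by positivity
    have hlc : ∀ n, c ≤ l n := by
      intro n
      have h1 : (b' - c) / ((n:ℝ) + 1) ≤ b' - c :=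
        div_le_self (by linarith) (by have : (0:ℝ) ≤ (n:ℝ) := Nat.cast_nonneg n; linarith)
      simp only [hl]
      linarith
    have hlb' : ∀ n, l n < b' := by
      intro n
      have h1 : 0 < (b' - c) / ((n:ℝ) + 1) := div_pos (by linarith) (hpos n)
      simp only [hl]
      linarith
    have hlaE : ∀ n, a < ((l n : ℝ) : EReal) := fun n =>
      lt_of_lt_of_le hca (by exact_mod_cast hlc n)
    have hlbE : ∀ n, ((l n : ℝ) : EReal) < (b' : EReal) := fun n => by
      exact_mod_cast hlb' n
    have h0 : Tendsto (fun n : ℕ => (b' - c) * (1 / ((n:ℝ) + 1))) atTop (𝓝 0) := by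
      simpa using tendsto_one_div_add_atTop_nhds_zero_nat.const_mul (b' - c)
    have hlt : Tendsto l atTop (𝓝 b') := by
      have h2 : Tendsto (fun _ : ℕ => b') atTop (𝓝 b') := tendsto_const_nhds
      have h3 := h2.sub h0
      simp only [sub_zero] at h3
      have heq : l = fun n : ℕ => b' - (b' - c) * (1 / ((n:ℝ) + 1)) := by
        funext n
        simp only [hl]
        rw [div_eq_mul_one_div]
      rw [heq]
      exact h3
    have hex : ∀ n, ∃ x : X, ∀ z, J x + l n * Φ x ≤ J z + l n * Φ z :=
      fun n => (hmin (l n) (hlaE n) (hlbE n)).exists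
    set x : ℕ → X := fun n => (hex n).choose with hxdef
    have hxs : ∀ n, ∀ z, J (x n) + l n * Φ (x n) ≤ J z + l n * Φ z :=
      fun n => (hex n).choose_spec
    have hlmono : StrictMono l := by
      intro m n hmn
      simp only [hl]
      have h1 : ((m:ℝ) + 1) < ((n:ℝ) + 1) := by exact_mod_cast Nat.succ_lt_succ hmn
      have := div_lt_div_of_pos_left (by linarith : (0:ℝ) < b' - c) (hpos m) h1
      linarith
    have hanti : Antitone (fun n => Φ (x n)) := by
      intro m n hmn
      rcases eq_or_lt_of_le hmn with h | h
      · subst h; exact le_refl _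
      · exact aux_mono J Φ (hlmono h) (hxs m) (hxs n)
    have hrx : ∀ n, r < Φ (x n) := fun n => hgt (l n) (hlaE n) (hlbE n) (x n) (hxs n)
    have hbdd : BddBelow (Set.range fun n => Φ (x n)) :=
      ⟨r, by rintro - ⟨n, rfl⟩; exact (hrx n).le⟩
    have hLtend : Tendsto (fun n => Φ (x n)) atTop (𝓝 (⨅ n, Φ (x n))) :=
      tendsto_atTop_ciInf hanti hbdd
    have hrL : r ≤ ⨅ n, Φ (x n) := le_ciInf fun n => (hrx n).le
    obtain ⟨x₀, hge, hminb, -⟩ := aux_master J Φ a b' hcpt l b' hab (le_refl _)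
      hlt x hxs _ hLtend
    have := hMb b' rfl x₀ hminb
    linarith
  | top =>
    obtain ⟨y, hyr⟩ := hy
    -- choose l large
    set m₀ : ℝ := J xc + c * Φ xc with hm₀
    set l : ℝ := max (c + 1) ((m₀ - J y - c * r) / (Φ y - r) + 1) with hldef
    have hlc : c < l := lt_of_lt_of_le (by linarith) (le_max_left _ _)
    have hla : a < (l : EReal) := lt_trans hca (by exact_mod_cast hlc)
    have hlb : (l : EReal) < ⊤ := by simp [EReal.coe_lt_top]
    obtain ⟨xl, hxl, -⟩ := hmin l hla hlb
    have h1 : r < Φ xl := hgt l hla hlb xl hxl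
    have h2 : m₀ ≤ J xl + c * Φ xl := hxc xl
    have h3 := hxl y
    have hd : Φ y - r < 0 := by linarith
    have hl2 : (m₀ - J y - c * r) / (Φ y - r) + 1 ≤ l := le_max_right _ _
    have h4 : l * (Φ y - r) ≤ ((m₀ - J y - c * r) / (Φ y - r) + 1) * (Φ y - r) :=
      mul_le_mul_of_nonpos_right hl2 hd.le
    have h5 : ((m₀ - J y - c * r) / (Φ y - r)) * (Φ y - r) = m₀ - J y - c * r :=
      div_mul_cancel₀ _ (ne_of_lt hd)
    have h6 : (l - c) * (Φ xl - r) > 0 := mul_pos (by linarith) (by linarith)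
    nlinarith [h2, h3, h4, h5, h6]

lemma aux_seq_up {d e : ℝ} (h : d < e) :
    Tendsto (fun n : ℕ => d + (e - d) / (n + 1)) atTop (𝓝 d) ∧
    (∀ m n : ℕ, m < n → d + (e - d) / (n + 1) < d + (e - d) / (m + 1)) ∧
    (∀ n : ℕ, d < d + (e - d) / (n + 1) ∧ d + (e - d) / (n + 1) ≤ e) := by
  have hpos : ∀ n : ℕ, (0:ℝ) < (n:ℝ) + 1 := fun n => by positivity
  refine ⟨?_, ?_, ?_⟩
  · have h0 : Tendsto (fun n : ℕ => (e - d) * (1 / ((n:ℝ) + 1))) atTop (𝓝 0) := by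
      simpa using tendsto_one_div_add_atTop_nhds_zero_nat.const_mul (e - d)
    have h2 : Tendsto (fun _ : ℕ => d) atTop (𝓝 d) := tendsto_const_nhds
    have h3 := h2.add h0
    simp only [add_zero] at h3
    have heq : (fun n : ℕ => d + (e - d) / ((n:ℝ) + 1)) =
        fun n : ℕ => d + (e - d) * (1 / ((n:ℝ) + 1)) := by
      funext n; rw [div_eq_mul_one_div]
    rw [heq]; exact h3
  · intro m n hmn
    have h1 : ((m:ℝ) + 1) < ((n:ℝ) + 1) := by exact_mod_cast Nat.succ_lt_succ hmn
    have := div_lt_div_of_pos_left (by linarith : (0:ℝ) < e - d) (hpos m) h1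
    linarith
  · intro n
    constructor
    · have : 0 < (e - d) / ((n:ℝ) + 1) := div_pos (by linarith) (hpos n)
      linarith
    · have h1 : (e - d) / ((n:ℝ) + 1) ≤ e - d :=
        div_le_self (by linarith) (by have : (0:ℝ) ≤ (n:ℝ) := Nat.cast_nonneg n; linarith)
      linarith

lemma aux_seq_down {d e : ℝ} (h : d < e) :
    Tendsto (fun n : ℕ => e - (e - d) / (n + 1)) atTop (𝓝 e) ∧
    (∀ m n : ℕ, m < n → e - (e - d) / (m + 1) < e - (e - d) / (n + 1)) ∧
    (∀ n : ℕ, e - (e - d) / (n + 1) < e ∧ d ≤ e - (e - d) / (n + 1)) := by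
  obtain ⟨h1, h2, h3⟩ := aux_seq_up (neg_lt_neg h)
  have heq : ∀ n : ℕ, e - (e - d) / ((n:ℝ) + 1) = -(-e + (-d - -e) / ((n:ℝ) + 1)) := by
    intro n; ring
  refine ⟨?_, ?_, ?_⟩
  · have := h1.neg
    rw [neg_neg] at this
    simpa only [← heq] using this
  · intro m n hmn
    have := h2 m n hmn
    rw [show -e + (-d - -e) / ((n:ℝ)+1) = -(e - (e-d)/((n:ℝ)+1)) by ring,
      show -e + (-d - -e) / ((m:ℝ)+1) = -(e - (e-d)/((m:ℝ)+1)) by ring] at this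
    exact neg_lt_neg_iff.mp this
  · intro n
    obtain ⟨c1, c2⟩ := h3 n
    constructor
    · rw [show -e + (-d - -e) / ((n:ℝ)+1) = -(e - (e-d)/((n:ℝ)+1)) by ring] at c1
      linarith [neg_lt_neg_iff.mp c1]
    · rw [show -e + (-d - -e) / ((n:ℝ)+1) = -(e - (e-d)/((n:ℝ)+1)) by ring] at c2
      linarith [neg_le_neg_iff.mp c2]

/-- Remark 1: if `α < β` and for each `λ ∈ ]a,b[` the function `J + λΦ` has sequentially
compact sub-level sets and a unique global minimum, then for each `r ∈ ]α,β[` there is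
`λ̂ ∈ ]a,b[` whose unique global minimum of `J + λ̂Φ` lies in `Φ⁻¹(r)`. -/
theorem stmt_13 {X : Type*} [TopologicalSpace X] [T2Space X] [Nonempty X]
    (J Φ : X → ℝ) (a b : EReal) (hab : a < b)
    (Ma Mb : Set X)
    (hMa : Ma = {x : X | ∃ a' : ℝ, a = (a' : EReal) ∧
      ∀ z : X, J x + a' * Φ x ≤ J z + a' * Φ z})
    (hMb : Mb = {x : X | ∃ b' : ℝ, b = (b' : EReal) ∧
      ∀ z : X, J x + b' * Φ x ≤ J z + b' * Φ z})
    (alpha beta : EReal)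
    (halpha : alpha = max (⨅ x : X, (Φ x : EReal)) (⨆ x : Mb, (Φ x.1 : EReal)))
    (hbeta : beta = min (⨆ x : X, (Φ x : EReal)) (⨅ x : Ma, (Φ x.1 : EReal)))
    (hαβ : alpha < beta)
    (hcpt : ∀ l : ℝ, a < (l : EReal) → (l : EReal) < b →
      ∀ r : ℝ, IsSeqCompact {x : X | J x + l * Φ x ≤ r})
    (hmin : ∀ l : ℝ, a < (l : EReal) → (l : EReal) < b →
      ∃! x : X, ∀ z : X, J x + l * Φ x ≤ J z + l * Φ z) :
    ∀ r : ℝ, alpha < (r : EReal) → (r : EReal) < beta →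
      ∃ lh : ℝ, a < (lh : EReal) ∧ (lh : EReal) < b ∧
        ∃ xh : X, (∀ z : X, J xh + lh * Φ xh ≤ J z + lh * Φ z) ∧
          (∀ x : X, (∀ z : X, J x + lh * Φ x ≤ J z + lh * Φ z) → x = xh) ∧
          Φ xh = r := by
  intro r hra hrb
  rw [halpha, max_lt_iff] at hra
  rw [hbeta, lt_min_iff] at hrb
  obtain ⟨hinf, hsupMb⟩ := hra
  obtain ⟨hsup, hinfMa⟩ := hrb
  -- extract real facts
  obtain ⟨y₁, hy₁⟩ : ∃ y : X, Φ y < r := by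
    obtain ⟨y, hy⟩ := iInf_lt_iff.mp hinf
    exact ⟨y, by exact_mod_cast hy⟩
  obtain ⟨y₂, hy₂⟩ : ∃ y : X, r < Φ y := by
    obtain ⟨y, hy⟩ := lt_iSup_iff.mp hsup
    exact ⟨y, by exact_mod_cast hy⟩
  have hMbr : ∀ x ∈ Mb, Φ x < r := by
    intro x hx
    have : (Φ x : EReal) ≤ ⨆ x : Mb, (Φ x.1 : EReal) :=
      le_iSup (fun x : Mb => (Φ x.1 : EReal)) ⟨x, hx⟩
    exact_mod_cast lt_of_le_of_lt this hsupMb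
  have hMar : ∀ x ∈ Ma, r < Φ x := by
    intro x hx
    have : (⨅ x : Ma, (Φ x.1 : EReal)) ≤ (Φ x : EReal) :=
      iInf_le (fun x : Ma => (Φ x.1 : EReal)) ⟨x, hx⟩
    exact_mod_cast lt_of_lt_of_le hinfMa this
  -- upper-side key lemma
  obtain ⟨l₁, h1a, h1b, x₁, hm1, hΦ1⟩ := aux_key J Φ a b hab hcpt hmin r ⟨y₁, hy₁⟩
    (by
      intro b' hb' x hx
      exact hMbr x (by rw [hMb]; exact ⟨b', hb', hx⟩))
  -- lower-side key lemma (negated)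
  have hab' : -b < -a := EReal.neg_lt_neg_iff.mpr hab
  have negswap1 : ∀ {u : EReal} {v : ℝ}, (v : EReal) < -u → u < ((-v : ℝ) : EReal) := by
    intro u v h
    rw [EReal.coe_neg]
    have := EReal.neg_lt_neg_iff.mpr h
    rwa [neg_neg] at this
  have negswap2 : ∀ {u : EReal} {v : ℝ}, -u < (v : EReal) → ((-v : ℝ) : EReal) < u := by
    intro u v h
    rw [EReal.coe_neg]
    have := EReal.neg_lt_neg_iff.mpr h
    rwa [neg_neg] at this
  have hcpt' : ∀ l : ℝ, -b < (l : EReal) → (l : EReal) < -a →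
      ∀ ρ : ℝ, IsSeqCompact {x : X | J x + l * (-Φ x) ≤ ρ} := by
    intro l h1 h2 ρ
    have h1' : a < ((-l : ℝ) : EReal) := negswap1 h2
    have h2' : ((-l : ℝ) : EReal) < b := negswap2 h1
    have hset : {x : X | J x + l * (-Φ x) ≤ ρ} = {x : X | J x + (-l) * Φ x ≤ ρ} := by
      ext x; simp only [Set.mem_setOf_eq, mul_neg, neg_mul]
    rw [hset]
    exact hcpt (-l) h1' h2' ρ
  have hmin' : ∀ l : ℝ, -b < (l : EReal) → (l : EReal) < -a →
      ∃! x : X, ∀ z : X, J x + l * (-Φ x) ≤ J z + l * (-Φ z) := by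
    intro l h1 h2
    have h1' : a < ((-l : ℝ) : EReal) := negswap1 h2
    have h2' : ((-l : ℝ) : EReal) < b := negswap2 h1
    have H := hmin (-l) h1' h2'
    simp only [neg_mul] at H
    simp only [mul_neg]
    exact H
  obtain ⟨nl₂, h2a', h2b', x₂, hm2', hΦ2'⟩ := aux_key J (fun x => -Φ x) (-b) (-a) hab'
    hcpt' hmin' (-r) ⟨y₂, by simpa using hy₂⟩
    (by
      intro a'' ha'' x hx
      simp only [neg_lt_neg_iff]
      apply hMar x
      rw [hMa]
      refine ⟨-a'', ?_, ?_⟩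
      · rw [EReal.coe_neg, ← ha'', neg_neg]
      · intro z
        have := hx z
        simp only [mul_neg] at this
        simpa only [neg_mul] using this
      )
  set l₂ : ℝ := -nl₂ with hl₂def
  have h2a : a < (l₂ : EReal) := negswap1 h2b'
  have h2b : (l₂ : EReal) < b := negswap2 h2a'
  have hm2 : ∀ z : X, J x₂ + l₂ * Φ x₂ ≤ J z + l₂ * Φ z := by
    intro z
    have := hm2' z
    simp only [mul_neg] at this
    simpa only [hl₂def, neg_mul] using this
  have hΦ2 : r ≤ Φ x₂ := by
    have : -Φ x₂ ≤ -r := hΦ2'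
    linarith
  classical
  set xsel : ℝ → X := fun t =>
    if h : a < (t : EReal) ∧ (t : EReal) < b then (hmin t h.1 h.2).exists.choose
    else Classical.arbitrary X with hxseldef
  have hxsel : ∀ t : ℝ, a < (t : EReal) → (t : EReal) < b →
      ∀ z, J (xsel t) + t * Φ (xsel t) ≤ J z + t * Φ z := by
    intro t h1 h2
    simp only [hxseldef, dif_pos (And.intro h1 h2)]
    exact (hmin t h1 h2).exists.choose_spec
  have huniq : ∀ t : ℝ, a < (t : EReal) → (t : EReal) < b → ∀ x : X,
      (∀ z, J x + t * Φ x ≤ J z + t * Φ z) → x = xsel t := by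
    intro t h1 h2 x hx
    obtain ⟨w, hw, hwu⟩ := hmin t h1 h2
    rw [hwu x hx, hwu (xsel t) (hxsel t h1 h2)]
  have hfin : ∀ t : ℝ, a < (t : EReal) → (t : EReal) < b → Φ (xsel t) = r →
      ∃ lh : ℝ, a < (lh : EReal) ∧ (lh : EReal) < b ∧
      ∃ xh : X, (∀ z : X, J xh + lh * Φ xh ≤ J z + lh * Φ z) ∧
        (∀ x : X, (∀ z : X, J x + lh * Φ x ≤ J z + lh * Φ z) → x = xh) ∧
        Φ xh = r :=
    fun t h1 h2 h3 => ⟨t, h1, h2, xsel t, hxsel t h1 h2,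
      fun x hx => huniq t h1 h2 x hx, h3⟩
  have hΦ1' : Φ (xsel l₁) ≤ r := by rw [← huniq l₁ h1a h1b x₁ hm1]; exact hΦ1
  have hΦ2' : r ≤ Φ (xsel l₂) := by rw [← huniq l₂ h2a h2b x₂ hm2]; exact hΦ2
  rcases eq_or_lt_of_le hΦ1' with heq1 | hlt1
  · exact hfin l₁ h1a h1b heq1
  rcases eq_or_lt_of_le hΦ2' with heq2 | hlt2
  · exact hfin l₂ h2a h2b heq2.symm
  have hl21 : l₂ < l₁ := by
    rcases lt_trichotomy l₂ l₁ with h | h | h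
    · exact h
    · rw [h] at hlt2; linarith
    · have := aux_mono J Φ h (hxsel l₁ h1a h1b) (hxsel l₂ h2a h2b)
      linarith
  set S : Set ℝ := {t : ℝ | l₂ ≤ t ∧ t ≤ l₁ ∧ r < Φ (xsel t)} with hSdef
  have hS2 : l₂ ∈ S := ⟨le_refl _, hl21.le, hlt2⟩
  have hbdd : BddAbove S := ⟨l₁, fun t ht => ht.2.1⟩
  set c : ℝ := sSup S with hcdef
  have hc2 : l₂ ≤ c := le_csSup hbdd hS2
  have hc1 : c ≤ l₁ := csSup_le ⟨l₂, hS2⟩ fun t ht => ht.2.1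
  have hint : ∀ t : ℝ, l₂ ≤ t → t ≤ l₁ → a < (t : EReal) ∧ (t : EReal) < b := by
    intro t ht1 ht2
    constructor
    · exact lt_of_lt_of_le h2a (by exact_mod_cast ht1)
    · exact lt_of_le_of_lt (by exact_mod_cast ht2 : (t : EReal) ≤ (l₁ : EReal)) h1b
  obtain ⟨hcA, hcB⟩ := hint c hc2 hc1
  rcases lt_trichotomy (Φ (xsel c)) r with hc | hc | hc
  · -- approach c from below
    have hl2c : l₂ < c := by
      rcases eq_or_lt_of_le hc2 with h | h
      · rw [← h] at hc; linarith
      · exact h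
    obtain ⟨ht_t, ht_mono, ht_bd⟩ := aux_seq_down hl2c
    set t : ℕ → ℝ := fun n => c - (c - l₂) / (n + 1) with htdef
    have htint : ∀ n, a < (t n : EReal) ∧ (t n : EReal) < b :=
      fun n => hint (t n) (ht_bd n).2 (le_trans (ht_bd n).1.le hc1)
    have htr : ∀ n, r < Φ (xsel (t n)) := by
      intro n
      obtain ⟨s, hsS, hts⟩ := exists_lt_of_lt_csSup ⟨l₂, hS2⟩ ((ht_bd n).1 : t n < sSup S)
      obtain ⟨hsa, hsb⟩ := hint s hsS.1 hsS.2.1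
      have := aux_mono J Φ hts (hxsel (t n) (htint n).1 (htint n).2) (hxsel s hsa hsb)
      linarith [hsS.2.2]
    have hanti : Antitone fun n => Φ (xsel (t n)) := by
      intro m n hmn
      rcases eq_or_lt_of_le hmn with h | h
      · rw [h]
      · exact aux_mono J Φ (ht_mono m n h) (hxsel (t m) (htint m).1 (htint m).2)
          (hxsel (t n) (htint n).1 (htint n).2)
    have hbddB : BddBelow (Set.range fun n => Φ (xsel (t n))) :=
      ⟨r, by rintro - ⟨n, rfl⟩; exact (htr n).le⟩
    have hLt : Tendsto (fun n => Φ (xsel (t n))) atTop (𝓝 (⨅ n, Φ (xsel (t n)))) :=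
      tendsto_atTop_ciInf hanti hbddB
    have hrL : r ≤ ⨅ n, Φ (xsel (t n)) := le_ciInf fun n => (htr n).le
    obtain ⟨x₀, hge, hminc, hEq⟩ := aux_master J Φ a b hcpt t c hcA hcB.le ht_t
      (fun n => xsel (t n)) (fun n => hxsel (t n) (htint n).1 (htint n).2) _ hLt
    have hx₀ : x₀ = xsel c := huniq c hcA hcB x₀ hminc
    rw [hx₀] at hEq
    rw [hEq hcB] at hc
    linarith
  · exact hfin c hcA hcB hc
  · -- approach c from above
    have hcl1 : c < l₁ := by
      rcases eq_or_lt_of_le hc1 with h | h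
      · rw [h] at hc; linarith
      · exact h
    obtain ⟨hw_t, hw_mono, hw_bd⟩ := aux_seq_up hcl1
    set w : ℕ → ℝ := fun n => c + (l₁ - c) / (n + 1) with hwdef
    have hwint : ∀ n, a < (w n : EReal) ∧ (w n : EReal) < b :=
      fun n => hint (w n) (le_trans hc2 (hw_bd n).1.le) (hw_bd n).2
    have hwr : ∀ n, Φ (xsel (w n)) ≤ r := by
      intro n
      by_contra hcon
      push_neg at hcon
      have hwS : w n ∈ S := ⟨le_trans hc2 (hw_bd n).1.le, (hw_bd n).2, hcon⟩
      have h5 : c < w n := (hw_bd n).1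
      have h6 : w n ≤ c := le_csSup hbdd hwS
      linarith
    have hmono : Monotone fun n => Φ (xsel (w n)) := by
      intro m n hmn
      rcases eq_or_lt_of_le hmn with h | h
      · rw [h]
      · exact aux_mono J Φ (hw_mono m n h) (hxsel (w n) (hwint n).1 (hwint n).2)
          (hxsel (w m) (hwint m).1 (hwint m).2)
    have hbddA : BddAbove (Set.range fun n => Φ (xsel (w n))) :=
      ⟨r, by rintro - ⟨n, rfl⟩; exact hwr n⟩
    have hLt : Tendsto (fun n => Φ (xsel (w n))) atTop (𝓝 (⨆ n, Φ (xsel (w n)))) :=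
      tendsto_atTop_ciSup hmono hbddA
    have hrL : (⨆ n, Φ (xsel (w n))) ≤ r := ciSup_le hwr
    obtain ⟨x₀, hge, hminc, hEq⟩ := aux_master J Φ a b hcpt w c hcA hcB.le hw_t
      (fun n => xsel (w n)) (fun n => hxsel (w n) (hwint n).1 (hwint n).2) _ hLt
    have hx₀ : x₀ = xsel c := huniq c hcA hcB x₀ hminc
    rw [hx₀] at hEq
    rw [hEq hcB] at hc
    linarith
end

section
/- Suppose α < β and for each λ ∈ ]a,b[ the function J + λΦ has sequentially compact sub-level sets and a unique global minimum. Then for each r ∈ ]α,β[ the problem of minimizing J over Φ⁻¹(r) is well-posed: J restricted to Φ⁻¹(r) has a unique global minimum x̂_r, and every sequence {x_n} in Φ⁻¹(r) with J(x_n) → inf_{Φ⁻¹(r)} J converges to x̂_r. -/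
open Filter Topology

section Aux
variable {X : Type*} [TopologicalSpace X] [T2Space X] [Nonempty X]

private lemma eps_le {a b : ℝ} (h : ∀ ε : ℝ, 0 < ε → a ≤ b + ε) : a ≤ b := by
  by_contra hc
  push_neg at hc
  linarith [h ((a - b) / 2) (by linarith)]

/-- sequential closedness of seq-compact sublevel sets in a T2 space -/
private lemma seqclosed {J Φ : X → ℝ} {l c : ℝ}
    (hc : IsSeqCompact {x : X | J x + l * Φ x ≤ c})
    {v : ℕ → X} {y : X} (hv : Tendsto v atTop (𝓝 y))
    (hev : ∀ᶠ n in atTop, J (v n) + l * Φ (v n) ≤ c) :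
    J y + l * Φ y ≤ c := by
  obtain ⟨N, hN⟩ := eventually_atTop.mp hev
  have hw : ∀ n : ℕ, v (n + N) ∈ {x : X | J x + l * Φ x ≤ c} :=
    fun n => hN _ (Nat.le_add_left _ _)
  obtain ⟨z, hz, φ, hφ, hφt⟩ := hc hw
  have h1 : Tendsto (fun n => v (n + N)) atTop (𝓝 y) := hv.comp (tendsto_add_atTop_nat N)
  have h2 : Tendsto ((fun n => v (n + N)) ∘ φ) atTop (𝓝 y) := h1.comp hφ.tendsto_atTop
  have h3 : y = z := tendsto_nhds_unique h2 hφt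
  exact h3 ▸ hz

/-- minimizing sequences converge to the unique minimizer -/
private lemma conv {J Φ : X → ℝ} {l : ℝ}
    (hcpt : ∀ c : ℝ, IsSeqCompact {x : X | J x + l * Φ x ≤ c})
    {xs : X} (hxs : ∀ z, J xs + l * Φ xs ≤ J z + l * Φ z)
    (huniq : ∀ x, (∀ z, J x + l * Φ x ≤ J z + l * Φ z) → x = xs)
    {u : ℕ → X}
    (hev : ∀ ε : ℝ, 0 < ε → ∀ᶠ n in atTop, J (u n) + l * Φ (u n) ≤ J xs + l * Φ xs + ε) :
    Tendsto u atTop (𝓝 xs) := by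
  set m := J xs + l * Φ xs with hm
  rw [Filter.tendsto_def]
  intro U hU
  by_contra hcon
  have hfreq : ∃ᶠ n in atTop, u n ∉ U := Filter.not_eventually.mp hcon
  obtain ⟨φ, hφ, hφU⟩ := extraction_of_frequently_atTop hfreq
  have hev1 : ∀ᶠ n in atTop, J (u (φ n)) + l * Φ (u (φ n)) ≤ m + 1 :=
    hφ.tendsto_atTop.eventually (hev 1 one_pos)
  obtain ⟨N, hN⟩ := eventually_atTop.mp hev1
  set w : ℕ → X := fun n => u (φ (n + N)) with hwdef
  have hwK : ∀ n, w n ∈ {x : X | J x + l * Φ x ≤ m + 1} := fun n => hN _ (Nat.le_add_left _ _)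
  obtain ⟨z, hz, ψ, hψ, hψt⟩ := hcpt (m + 1) hwK
  have hzmin : ∀ z', J z + l * Φ z ≤ J z' + l * Φ z' := by
    intro z'
    have hle : J z + l * Φ z ≤ m := by
      apply eps_le
      intro ε hε
      refine seqclosed (hcpt (m + ε)) hψt ?_
      have hmap : Tendsto (fun k => φ (ψ k + N)) atTop atTop :=
        hφ.tendsto_atTop.comp ((tendsto_add_atTop_nat N).comp hψ.tendsto_atTop)
      exact hmap.eventually (hev ε hε)
    exact hle.trans (hxs z')
  have hzx : z = xs := huniq z hzmin
  rw [hzx] at hψt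
  have hevU : ∀ᶠ k in atTop, (w ∘ ψ) k ∈ U := hψt.eventually_mem hU
  obtain ⟨n, hn⟩ := hevU.exists
  exact hφU _ hn

/-- the core limiting lemma: approach `t` from below with minimizers whose `Φ`-value
is at least `r`; in the limit we get a minimizer of `J + tΦ` with `Φ`-value ≥ r. -/
private lemma core {J Φ : X → ℝ} (a b : EReal)
    (hcpt : ∀ l : ℝ, a < (l : EReal) → (l : EReal) < b →
      ∀ c : ℝ, IsSeqCompact {x : X | J x + l * Φ x ≤ c})
    {t r l0 P : ℝ} (hl0a : a < (l0 : EReal)) (hl0t : l0 < t) (htb : (t : EReal) ≤ b)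
    {ν : ℕ → ℝ} (hνt : Tendsto ν atTop (𝓝 t))
    (hν1 : ∀ n, l0 ≤ ν n) (hν2 : ∀ n, ν n < t)
    {x : ℕ → X} (hxmin : ∀ n, ∀ z, J (x n) + ν n * Φ (x n) ≤ J z + ν n * Φ z)
    (hΦlo : ∀ n, r ≤ Φ (x n)) (hΦhi : ∀ n, Φ (x n) ≤ P) :
    ∃ y : X, r ≤ Φ y ∧ ∀ z, J y + t * Φ y ≤ J z + t * Φ z := by
  have hl0b : (l0 : EReal) < b := lt_of_lt_of_le (EReal.coe_lt_coe_iff.2 hl0t) htb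
  have haν : ∀ n, a < (ν n : EReal) :=
    fun n => lt_of_lt_of_le hl0a (EReal.coe_le_coe_iff.2 (hν1 n))
  have hνb : ∀ n, (ν n : EReal) < b :=
    fun n => lt_of_lt_of_le (EReal.coe_lt_coe_iff.2 (hν2 n)) htb
  set M : ℝ := max |r| |P| with hM
  have hMx : ∀ n, |Φ (x n)| ≤ M := by
    intro n
    rw [abs_le]
    constructor
    · have : -|r| ≤ r := neg_abs_le r
      have h2 : -M ≤ -|r| := by simp [hM, neg_le_neg_iff]
      linarith [hΦlo n]
    · have : P ≤ |P| := le_abs_self P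
      have h2 : |P| ≤ M := le_max_right _ _
      linarith [hΦhi n]
  set B : ℝ := max |l0| |t| with hB
  have hBν : ∀ n, |ν n| ≤ B := by
    intro n
    rw [abs_le]
    constructor
    · have : -|l0| ≤ l0 := neg_abs_le l0
      have h2 : |l0| ≤ B := le_max_left _ _
      linarith [hν1 n]
    · have : t ≤ |t| := le_abs_self t
      have h2 : |t| ≤ B := le_max_right _ _
      linarith [(hν2 n).le]
  obtain ⟨z0⟩ : Nonempty X := inferInstance
  set C : ℝ := J z0 + B * |Φ z0| + (t - l0) * M with hC
  have hxC : ∀ n, x n ∈ {x : X | J x + l0 * Φ x ≤ C} := by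
    intro n
    have e1 : ν n * Φ z0 ≤ B * |Φ z0| := by
      calc ν n * Φ z0 ≤ |ν n * Φ z0| := le_abs_self _
        _ = |ν n| * |Φ z0| := abs_mul _ _
        _ ≤ B * |Φ z0| := mul_le_mul_of_nonneg_right (hBν n) (abs_nonneg _)
    have e2 : (l0 - ν n) * Φ (x n) ≤ (t - l0) * M := by
      calc (l0 - ν n) * Φ (x n) ≤ |(l0 - ν n) * Φ (x n)| := le_abs_self _
        _ = |l0 - ν n| * |Φ (x n)| := abs_mul _ _
        _ ≤ (t - l0) * M := by
            apply mul_le_mul _ (hMx n) (abs_nonneg _) (by linarith)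
            rw [abs_le]
            constructor <;> [linarith [(hν2 n).le]; linarith [hν1 n]]
    have e3 := hxmin n z0
    have e4 : J (x n) + l0 * Φ (x n)
        = (J (x n) + ν n * Φ (x n)) + (l0 - ν n) * Φ (x n) := by ring
    simp only [Set.mem_setOf_eq, hC]
    linarith [e1, e2, e3, e4]
  obtain ⟨y, hy, φ, hφ, hφt⟩ := hcpt l0 hl0a hl0b C hxC
  have hmaster : ∀ lam : ℝ, l0 ≤ lam → lam < t → ∀ z,
      J y + lam * Φ y ≤ J z + t * Φ z + (lam - t) * r := by
    intro lam h1 h2 z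
    apply eps_le
    intro ε hε
    have hlama : a < (lam : EReal) := lt_of_lt_of_le hl0a (EReal.coe_le_coe_iff.2 h1)
    have hlamb : (lam : EReal) < b := lt_of_lt_of_le (EReal.coe_lt_coe_iff.2 h2) htb
    refine seqclosed (hcpt lam hlama hlamb (J z + t * Φ z + (lam - t) * r + ε)) hφt ?_
    have hev : ∀ᶠ n in atTop,
        J (x n) + lam * Φ (x n) ≤ J z + t * Φ z + (lam - t) * r + ε := by
      have h3 : Tendsto (fun n => J z + ν n * Φ z + (lam - ν n) * r) atTop
          (𝓝 (J z + t * Φ z + (lam - t) * r)) := by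
        have := ((tendsto_const_nhds (x := J z)).add (hνt.mul_const (Φ z))).add
          (((tendsto_const_nhds (x := lam)).sub hνt).mul_const r)
        simpa using this
      have h4 : ∀ᶠ n in atTop,
          J z + ν n * Φ z + (lam - ν n) * r < J z + t * Φ z + (lam - t) * r + ε :=
        h3.eventually_lt_const (by linarith)
      have h5 : ∀ᶠ n in atTop, lam ≤ ν n :=
        (hνt.eventually_const_lt h2).mono fun n h => h.le
      filter_upwards [h4, h5] with n h4n h5n
      have k1 := hxmin n z
      have k2 : (lam - ν n) * Φ (x n) ≤ (lam - ν n) * r :=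
        mul_le_mul_of_nonpos_left (hΦlo n) (by linarith)
      have e : J (x n) + lam * Φ (x n)
          = (J (x n) + ν n * Φ (x n)) + (lam - ν n) * Φ (x n) := by ring
      linarith [k1, k2, h4n, e]
    exact hφ.tendsto_atTop.eventually hev
  refine ⟨y, ?_, ?_⟩
  · have h := hmaster l0 le_rfl hl0t y
    have h2 : (t - l0) * r ≤ (t - l0) * Φ y := by nlinarith [h]
    have h3 : (0:ℝ) < t - l0 := by linarith
    exact le_of_mul_le_mul_left h2 h3
  · intro z
    have hseq : ∀ n, J y + ν n * Φ y ≤ J z + t * Φ z + (ν n - t) * r :=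
      fun n => hmaster (ν n) (hν1 n) (hν2 n) z
    have hL : Tendsto (fun n => J y + ν n * Φ y) atTop (𝓝 (J y + t * Φ y)) :=
      (tendsto_const_nhds (x := J y)).add (hνt.mul_const (Φ y))
    have hR : Tendsto (fun n => J z + t * Φ z + (ν n - t) * r) atTop
        (𝓝 (J z + t * Φ z + (t - t) * r)) :=
      (tendsto_const_nhds (x := J z + t * Φ z)).add ((hνt.sub_const t).mul_const r)
    have := le_of_tendsto_of_tendsto' hL hR hseq
    simpa using this


/-- mirror image of `core`: approach `t` from above with minimizers whose `Φ`-value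
is at most `r`. -/
private lemma core_above {J Φ : X → ℝ} (a b : EReal)
    (hcpt : ∀ l : ℝ, a < (l : EReal) → (l : EReal) < b →
      ∀ c : ℝ, IsSeqCompact {x : X | J x + l * Φ x ≤ c})
    {t r l0 P : ℝ} (hl0b : (l0 : EReal) < b) (htl0 : t < l0) (hat : a ≤ (t : EReal))
    {ν : ℕ → ℝ} (hνt : Tendsto ν atTop (𝓝 t))
    (hν1 : ∀ n, ν n ≤ l0) (hν2 : ∀ n, t < ν n)
    {x : ℕ → X} (hxmin : ∀ n, ∀ z, J (x n) + ν n * Φ (x n) ≤ J z + ν n * Φ z)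
    (hΦhi : ∀ n, Φ (x n) ≤ r) (hΦlo : ∀ n, P ≤ Φ (x n)) :
    ∃ y : X, Φ y ≤ r ∧ ∀ z, J y + t * Φ y ≤ J z + t * Φ z := by
  have hcpt' : ∀ l : ℝ, -b < (l : EReal) → (l : EReal) < -a →
      ∀ c : ℝ, IsSeqCompact {x : X | J x + l * (-Φ) x ≤ c} := by
    intro l h1 h2 c
    have e : {x : X | J x + l * (-Φ) x ≤ c} = {x : X | J x + (-l) * Φ x ≤ c} := by
      ext w
      simp only [Set.mem_setOf_eq, Pi.neg_apply, mul_neg, neg_mul]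
    rw [e]
    refine hcpt (-l) ?_ ?_ c
    · rw [EReal.coe_neg]
      exact EReal.lt_neg_comm.mp h2
    · rw [EReal.coe_neg]
      exact EReal.neg_lt_comm.mp h1
  have h1 : -b < ((-l0 : ℝ) : EReal) := by
    rw [EReal.coe_neg]; exact EReal.neg_lt_neg_iff.mpr hl0b
  have h2 : (-l0 : ℝ) < -t := by linarith
  have h3 : ((-t : ℝ) : EReal) ≤ -a := by
    rw [EReal.coe_neg]; exact EReal.neg_le_neg_iff.mpr hat
  have h4 : Tendsto (fun n => -(ν n)) atTop (𝓝 (-t)) := hνt.neg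
  have h5 : ∀ n, (-l0 : ℝ) ≤ -(ν n) := fun n => by linarith [hν1 n]
  have h6 : ∀ n, -(ν n) < -t := fun n => by linarith [hν2 n]
  have h7 : ∀ n, ∀ z, J (x n) + (-(ν n)) * (-Φ) (x n) ≤ J z + (-(ν n)) * (-Φ) z := by
    intro n z
    have := hxmin n z
    simp only [Pi.neg_apply, neg_mul_neg]
    linarith
  have h8 : ∀ n, -r ≤ (-Φ) (x n) := fun n => by
    simp only [Pi.neg_apply]; linarith [hΦhi n]
  have h9 : ∀ n, (-Φ) (x n) ≤ -P := fun n => by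
    simp only [Pi.neg_apply]; linarith [hΦlo n]
  obtain ⟨y, hy1, hy2⟩ := core (J := J) (Φ := -Φ) (-b) (-a) hcpt' h1 h2 h3 h4 h5 h6 h7 h8 h9
  refine ⟨y, ?_, ?_⟩
  · simp only [Pi.neg_apply] at hy1; linarith
  · intro z
    have := hy2 z
    simp only [Pi.neg_apply, neg_mul_neg] at this
    linarith

end Aux

/-- Theorem 1 (well-posedness): if `α < β` and for each `λ ∈ ]a,b[` the function
`J + λΦ` has sequentially compact sub-level sets and a unique global minimum, then for
each `r ∈ ]α,β[` the problem of minimizing `J` over `Φ⁻¹(r)` is well-posed. -/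
theorem stmt_14 {X : Type*} [TopologicalSpace X] [T2Space X] [Nonempty X]
    (J Φ : X → ℝ) (a b : EReal) (hab : a < b)
    (Ma Mb : Set X)
    (hMa : Ma = {x : X | ∃ a' : ℝ, a = (a' : EReal) ∧
      ∀ z : X, J x + a' * Φ x ≤ J z + a' * Φ z})
    (hMb : Mb = {x : X | ∃ b' : ℝ, b = (b' : EReal) ∧
      ∀ z : X, J x + b' * Φ x ≤ J z + b' * Φ z})
    (alpha beta : EReal)
    (halpha : alpha = max (⨅ x : X, (Φ x : EReal)) (⨆ x : Mb, (Φ x.1 : EReal)))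
    (hbeta : beta = min (⨆ x : X, (Φ x : EReal)) (⨅ x : Ma, (Φ x.1 : EReal)))
    (hαβ : alpha < beta)
    (hcpt : ∀ l : ℝ, a < (l : EReal) → (l : EReal) < b →
      ∀ r : ℝ, IsSeqCompact {x : X | J x + l * Φ x ≤ r})
    (hmin : ∀ l : ℝ, a < (l : EReal) → (l : EReal) < b →
      ∃! x : X, ∀ z : X, J x + l * Φ x ≤ J z + l * Φ z) :
    ∀ r : ℝ, alpha < (r : EReal) → (r : EReal) < beta →
      ∃ xh : X, Φ xh = r ∧ (∀ x : X, Φ x = r → J xh ≤ J x) ∧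
        (∀ x : X, Φ x = r → J x ≤ J xh → x = xh) ∧
        (∀ u : ℕ → X, (∀ n, Φ (u n) = r) →
          Tendsto (fun n => J (u n)) atTop (𝓝 (J xh)) →
          Tendsto u atTop (𝓝 xh)) := by
  intro r har hrb
  classical
  -- a total choice of minimizers
  have hchoice : ∀ l : ℝ, ∃ x : X, a < (l : EReal) → (l : EReal) < b →
      (∀ z, J x + l * Φ x ≤ J z + l * Φ z) ∧
      ∀ x', (∀ z, J x' + l * Φ x' ≤ J z + l * Φ z) → x' = x := by
    intro l
    by_cases h1 : a < (l : EReal)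
    · by_cases h2 : (l : EReal) < b
      · obtain ⟨x, hx1, hx2⟩ := hmin l h1 h2
        exact ⟨x, fun _ _ => ⟨hx1, hx2⟩⟩
      · exact ⟨Classical.arbitrary X, fun _ h2' => absurd h2' h2⟩
    · exact ⟨Classical.arbitrary X, fun h1' => absurd h1' h1⟩
  choose xm hxm using hchoice
  -- monotonicity of l ↦ Φ (xm l)
  have hmono : ∀ l1 l2 : ℝ, a < (l1 : EReal) → ((l2 : EReal)) < b → l1 ≤ l2 →
      Φ (xm l2) ≤ Φ (xm l1) := by
    intro l1 l2 h1 h2 hle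
    rcases eq_or_lt_of_le hle with rfl | hlt
    · exact le_refl _
    · have ha2 : a < (l2 : EReal) := h1.trans (EReal.coe_lt_coe_iff.2 hlt)
      have hb1 : (l1 : EReal) < b := (EReal.coe_lt_coe_iff.2 hlt).trans h2
      have m1 := (hxm l1 h1 hb1).1 (xm l2)
      have m2 := (hxm l2 ha2 h2).1 (xm l1)
      have key : (l2 - l1) * (Φ (xm l2) - Φ (xm l1)) ≤ 0 := by nlinarith [m1, m2]
      nlinarith [key, sub_pos.2 hlt]
  -- basic consequences of alpha < r < beta
  obtain ⟨x1, hx1⟩ : ∃ x1 : X, Φ x1 < r := by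
    have h1 : (⨅ x : X, (Φ x : EReal)) < (r : EReal) :=
      lt_of_le_of_lt (halpha ▸ le_max_left _ _) har
    rw [iInf_lt_iff] at h1
    obtain ⟨x1, h⟩ := h1
    exact ⟨x1, EReal.coe_lt_coe_iff.1 h⟩
  obtain ⟨x0, hx0⟩ : ∃ x0 : X, r < Φ x0 := by
    have h1 : (r : EReal) < ⨆ x : X, (Φ x : EReal) :=
      lt_of_lt_of_le hrb (hbeta ▸ min_le_left _ _)
    rw [lt_iSup_iff] at h1
    obtain ⟨x0, h⟩ := h1
    exact ⟨x0, EReal.coe_lt_coe_iff.1 h⟩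
  have hMbr : ∀ y, y ∈ Mb → Φ y < r := by
    intro y hy
    have h1 : (Φ y : EReal) ≤ ⨆ x : Mb, (Φ x.1 : EReal) :=
      le_iSup (fun x : Mb => (Φ x.1 : EReal)) ⟨y, hy⟩
    have h2 : (Φ y : EReal) < (r : EReal) :=
      lt_of_le_of_lt (h1.trans (halpha ▸ le_max_right _ _)) har
    exact EReal.coe_lt_coe_iff.1 h2
  have hMar : ∀ y, y ∈ Ma → r < Φ y := by
    intro y hy
    have h1 : (⨅ x : Ma, (Φ x.1 : EReal)) ≤ (Φ y : EReal) :=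
      iInf_le (fun x : Ma => (Φ x.1 : EReal)) ⟨y, hy⟩
    have h2 : (r : EReal) < (Φ y : EReal) :=
      lt_of_lt_of_le hrb ((hbeta ▸ min_le_right _ _).trans h1)
    exact EReal.coe_lt_coe_iff.1 h2
  obtain ⟨l0, hl0a, hl0b⟩ := EReal.exists_between_coe_real hab
  -- Claim P1: some l2 in ]a,b[ with Φ (xm l2) < r
  have P1 : ∃ l2 : ℝ, a < (l2 : EReal) ∧ (l2 : EReal) < b ∧ Φ (xm l2) < r := by
    by_contra hcon
    push_neg at hcon
    rcases eq_or_ne b ⊤ with hb | hb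
    · set m0 := J (xm l0) + l0 * Φ (xm l0) with hm0
      set μ := max (l0 + 1) ((J x1 - m0 + l0 * r + 1) / (r - Φ x1)) with hμ
      have hμ1 : l0 + 1 ≤ μ := le_max_left _ _
      have haμ : a < (μ : EReal) := hl0a.trans (EReal.coe_lt_coe_iff.2 (by linarith))
      have hμb : (μ : EReal) < b := hb ▸ EReal.coe_lt_top μ
      have h1 := (hxm μ haμ hμb).1 x1
      have h2 := (hxm l0 hl0a hl0b).1 (xm μ)
      have h3 : r ≤ Φ (xm μ) := hcon μ haμ hμb
      have h4 : (J x1 - m0 + l0 * r + 1) / (r - Φ x1) ≤ μ := le_max_right _ _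
      have h5 : J x1 - m0 + l0 * r + 1 ≤ μ * (r - Φ x1) := by
        rw [div_le_iff₀ (by linarith : (0:ℝ) < r - Φ x1)] at h4
        linarith
      have h6 : (μ - l0) * r ≤ (μ - l0) * Φ (xm μ) :=
        mul_le_mul_of_nonneg_left h3 (by linarith)
      have e : μ * Φ (xm μ) = l0 * Φ (xm μ) + (μ - l0) * Φ (xm μ) := by ring
      nlinarith [h1, h2, h5, h6, e]
    · have hbne : b ≠ ⊥ := fun h => by rw [h] at hab; exact (not_lt_bot hab)
      set b' := b.toReal with hb'
      have hbb : (b' : EReal) = b := EReal.coe_toReal hb hbne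
      have hl0b' : l0 < b' := by
        have := hl0b
        rw [← hbb] at this
        exact EReal.coe_lt_coe_iff.1 this
      set ν : ℕ → ℝ := fun n => b' - (b' - l0) / (n + 2) with hνdef
      have hν1 : ∀ n, l0 ≤ ν n := by
        intro n
        have h0 : (b' - l0) / ((n:ℝ) + 2) ≤ b' - l0 :=
          div_le_self (by linarith) (by have := Nat.cast_nonneg (α := ℝ) n; linarith)
        simp only [hνdef]
        linarith
      have hν2 : ∀ n, ν n < b' := by
        intro n
        have h0 : (0:ℝ) < (b' - l0) / ((n:ℝ) + 2) := div_pos (by linarith) (by positivity)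
        simp only [hνdef]
        linarith
      have haν : ∀ n, a < (ν n : EReal) :=
        fun n => hl0a.trans_le (EReal.coe_le_coe_iff.2 (hν1 n))
      have hνb : ∀ n, (ν n : EReal) < b :=
        fun n => lt_of_lt_of_le (EReal.coe_lt_coe_iff.2 (hν2 n)) hbb.le
      have hνt : Tendsto ν atTop (𝓝 b') := by
        have h1 : Tendsto (fun n : ℕ => (b' - l0) / ((n:ℝ) + 2)) atTop (𝓝 0) :=
          Tendsto.div_atTop tendsto_const_nhds
            (tendsto_atTop_add_const_right _ 2 tendsto_natCast_atTop_atTop)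
        have h2 := (tendsto_const_nhds (x := b')).sub h1
        simpa using h2
      obtain ⟨y, hyr, hymin⟩ := core a b hcpt hl0a hl0b' hbb.le hνt hν1 hν2
        (x := fun n => xm (ν n)) (fun n => (hxm (ν n) (haν n) (hνb n)).1)
        (fun n => hcon (ν n) (haν n) (hνb n))
        (P := Φ (xm l0)) (fun n => hmono l0 (ν n) hl0a (hνb n) (hν1 n))
      have hyMb : y ∈ Mb := by rw [hMb]; exact ⟨b', hbb.symm, hymin⟩
      linarith [hMbr y hyMb, hyr]
  -- Claim P2: some l1 in ]a,b[ with r ≤ Φ (xm l1)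
  have P2 : ∃ l1 : ℝ, a < (l1 : EReal) ∧ (l1 : EReal) < b ∧ r ≤ Φ (xm l1) := by
    by_contra hcon
    push_neg at hcon
    rcases eq_or_ne a ⊥ with ha | ha
    · set m0 := J (xm l0) + l0 * Φ (xm l0) with hm0
      set μ := min (l0 - 1) ((J x0 - m0 + l0 * r + 1) / (r - Φ x0)) with hμ
      have hμ1 : μ ≤ l0 - 1 := min_le_left _ _
      have haμ : a < (μ : EReal) := ha ▸ EReal.bot_lt_coe μ
      have hμb : (μ : EReal) < b := (EReal.coe_lt_coe_iff.2 (by linarith)).trans hl0b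
      have h1 := (hxm μ haμ hμb).1 x0
      have h2 := (hxm l0 hl0a hl0b).1 (xm μ)
      have h3 : Φ (xm μ) < r := hcon μ haμ hμb
      have h4 : μ ≤ (J x0 - m0 + l0 * r + 1) / (r - Φ x0) := min_le_right _ _
      have h5 : J x0 - m0 + l0 * r + 1 ≤ μ * (r - Φ x0) := by
        rw [le_div_iff_of_neg (by linarith : r - Φ x0 < 0)] at h4
        linarith
      have h6 : (μ - l0) * r ≤ (μ - l0) * Φ (xm μ) :=
        mul_le_mul_of_nonpos_left h3.le (by linarith)
      have e : μ * Φ (xm μ) = l0 * Φ (xm μ) + (μ - l0) * Φ (xm μ) := by ring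
      nlinarith [h1, h2, h5, h6, e]
    · have hane : a ≠ ⊤ := hab.ne_top
      set a' := a.toReal with ha'
      have haa : (a' : EReal) = a := EReal.coe_toReal hane ha
      have ha'l0 : a' < l0 := by
        have := hl0a
        rw [← haa] at this
        exact EReal.coe_lt_coe_iff.1 this
      set ν : ℕ → ℝ := fun n => a' + (l0 - a') / (n + 2) with hνdef
      have hν1 : ∀ n, ν n ≤ l0 := by
        intro n
        have h0 : (l0 - a') / ((n:ℝ) + 2) ≤ l0 - a' :=
          div_le_self (by linarith) (by have := Nat.cast_nonneg (α := ℝ) n; linarith)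
        simp only [hνdef]
        linarith
      have hν2 : ∀ n, a' < ν n := by
        intro n
        have h0 : (0:ℝ) < (l0 - a') / ((n:ℝ) + 2) := div_pos (by linarith) (by positivity)
        simp only [hνdef]
        linarith
      have haν : ∀ n, a < (ν n : EReal) :=
        fun n => lt_of_le_of_lt haa.ge (EReal.coe_lt_coe_iff.2 (hν2 n))
      have hνb : ∀ n, (ν n : EReal) < b :=
        fun n => lt_of_le_of_lt (EReal.coe_le_coe_iff.2 (hν1 n)) hl0b
      have hνt : Tendsto ν atTop (𝓝 a') := by
        have h1 : Tendsto (fun n : ℕ => (l0 - a') / ((n:ℝ) + 2)) atTop (𝓝 0) :=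
          Tendsto.div_atTop tendsto_const_nhds
            (tendsto_atTop_add_const_right _ 2 tendsto_natCast_atTop_atTop)
        have h2 := (tendsto_const_nhds (x := a')).add h1
        simpa using h2
      obtain ⟨y, hyr, hymin⟩ := core_above a b hcpt hl0b ha'l0 haa.ge hνt hν1 hν2
        (x := fun n => xm (ν n)) (fun n => (hxm (ν n) (haν n) (hνb n)).1)
        (fun n => (hcon (ν n) (haν n) (hνb n)).le)
        (P := Φ (xm l0)) (fun n => hmono (ν n) l0 (haν n) hl0b (hν1 n))
      have hyMa : y ∈ Ma := by rw [hMa]; exact ⟨a', haa.symm, hymin⟩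
      linarith [hMar y hyMa, hyr]
  -- main case: locate the multiplier ls with Φ (xm ls) = r
  obtain ⟨l2, hl2a, hl2b, hl2⟩ := P1
  obtain ⟨l1, hl1a, hl1b, hl1⟩ := P2
  have hl12 : l1 < l2 := by
    by_contra h
    push_neg at h
    linarith [hmono l2 l1 hl2a hl1b h]
  set S : Set ℝ := {l | (a < (l : EReal) ∧ (l : EReal) < b ∧ r ≤ Φ (xm l)) ∧ l1 ≤ l ∧ l ≤ l2}
    with hSdef
  have hS1 : l1 ∈ S := ⟨⟨hl1a, hl1b, hl1⟩, le_rfl, hl12.le⟩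
  have hSne : S.Nonempty := ⟨l1, hS1⟩
  have hSbdd : BddAbove S := ⟨l2, fun x hx => hx.2.2⟩
  set ls := sSup S with hls
  have hl1ls : l1 ≤ ls := le_csSup hSbdd hS1
  have hlsl2 : ls ≤ l2 := csSup_le hSne (fun x hx => hx.2.2)
  have hlsa : a < (ls : EReal) := hl1a.trans_le (EReal.coe_le_coe_iff.2 hl1ls)
  have hlsb : (ls : EReal) < b := lt_of_le_of_lt (EReal.coe_le_coe_iff.2 hlsl2) hl2b
  obtain ⟨c, hlsc, hcb⟩ := EReal.exists_between_coe_real hlsb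
  have hlsc' : ls < c := EReal.coe_lt_coe_iff.1 hlsc
  have hca : a < (c : EReal) := hlsa.trans hlsc
  have hgt : ∀ μ : ℝ, ls < μ → μ ≤ c → Φ (xm μ) < r := by
    intro μ h1 h2
    have haμ : a < (μ : EReal) := hlsa.trans (EReal.coe_lt_coe_iff.2 h1)
    have hμb : (μ : EReal) < b := lt_of_le_of_lt (EReal.coe_le_coe_iff.2 h2) hcb
    by_cases h3 : μ ≤ l2
    · by_contra h4
      push_neg at h4
      have hmem : μ ∈ S := ⟨⟨haμ, hμb, h4⟩, (hl1ls.trans h1.le), h3⟩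
      exact absurd (le_csSup hSbdd hmem) (not_le.2 h1)
    · push_neg at h3
      calc Φ (xm μ) ≤ Φ (xm l2) := hmono l2 μ hl2a hμb h3.le
        _ < r := hl2
  rcases lt_or_ge (Φ (xm ls)) r with hcase | hcase
  · -- impossible: approach ls from below inside S
    exfalso
    have hl1ls' : l1 < ls := by
      rcases hl1ls.lt_or_eq with h | h
      · exact h
      · rw [← h] at hcase; linarith
    have hnotin : ∀ s ∈ S, s < ls := by
      intro s hs
      rcases (le_csSup hSbdd hs).lt_or_eq with h | h
      · exact h
      · exfalso
        rw [h] at hs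
        linarith [hs.1.2.2]
    have hex : ∀ n : ℕ, ∃ s, s ∈ S ∧ ls - 1 / (n + 2) < s := by
      intro n
      have hpos : (0:ℝ) < 1 / ((n:ℝ) + 2) := by positivity
      obtain ⟨s, hs, hlt⟩ := exists_lt_of_lt_csSup hSne
        (show ls - 1 / ((n:ℝ) + 2) < ls by linarith)
      exact ⟨s, hs, hlt⟩
    choose ν hνS hνlt using hex
    have hνlts : ∀ n, ν n < ls := fun n => hnotin _ (hνS n)
    have hνt : Tendsto ν atTop (𝓝 ls) := by
      have hlow : Tendsto (fun n : ℕ => ls - 1 / ((n:ℝ) + 2)) atTop (𝓝 ls) := by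
        have h1 : Tendsto (fun n : ℕ => (1:ℝ) / ((n:ℝ) + 2)) atTop (𝓝 0) :=
          Tendsto.div_atTop tendsto_const_nhds
            (tendsto_atTop_add_const_right _ 2 tendsto_natCast_atTop_atTop)
        have h2 := (tendsto_const_nhds (x := ls)).sub h1
        simpa using h2
      exact tendsto_of_tendsto_of_tendsto_of_le_of_le hlow tendsto_const_nhds
        (fun n => (hνlt n).le) (fun n => (hνlts n).le)
    obtain ⟨y, hyr, hymin⟩ := core a b hcpt hl1a hl1ls' hlsb.le hνt
      (fun n => (hνS n).2.1) hνlts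
      (x := fun n => xm (ν n)) (fun n => (hxm (ν n) (hνS n).1.1 (hνS n).1.2.1).1)
      (fun n => (hνS n).1.2.2)
      (P := Φ (xm l1)) (fun n => hmono l1 (ν n) hl1a (hνS n).1.2.1 (hνS n).2.1)
    have hy' : y = xm ls := (hxm ls hlsa hlsb).2 y hymin
    rw [hy'] at hyr
    linarith
  · -- approach ls from above: Φ (xm ls) ≤ r, hence = r
    set μs : ℕ → ℝ := fun n => ls + (c - ls) / (n + 2) with hμsdef
    have hμ1 : ∀ n, μs n ≤ c := by
      intro n
      have h0 : (c - ls) / ((n:ℝ) + 2) ≤ c - ls :=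
        div_le_self (by linarith) (by have := Nat.cast_nonneg (α := ℝ) n; linarith)
      simp only [hμsdef]
      linarith
    have hμ2 : ∀ n, ls < μs n := by
      intro n
      have h0 : (0:ℝ) < (c - ls) / ((n:ℝ) + 2) := div_pos (by linarith) (by positivity)
      simp only [hμsdef]
      linarith
    have haμ : ∀ n, a < (μs n : EReal) :=
      fun n => hlsa.trans (EReal.coe_lt_coe_iff.2 (hμ2 n))
    have hμb : ∀ n, (μs n : EReal) < b :=
      fun n => lt_of_le_of_lt (EReal.coe_le_coe_iff.2 (hμ1 n)) hcb
    have hμt : Tendsto μs atTop (𝓝 ls) := by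
      have h1 : Tendsto (fun n : ℕ => (c - ls) / ((n:ℝ) + 2)) atTop (𝓝 0) :=
        Tendsto.div_atTop tendsto_const_nhds
          (tendsto_atTop_add_const_right _ 2 tendsto_natCast_atTop_atTop)
      have h2 := (tendsto_const_nhds (x := ls)).add h1
      simpa using h2
    obtain ⟨y, hyr, hymin⟩ := core_above a b hcpt hcb hlsc' hlsa.le hμt hμ1 hμ2
      (x := fun n => xm (μs n)) (fun n => (hxm (μs n) (haμ n) (hμb n)).1)
      (fun n => (hgt (μs n) (hμ2 n) (hμ1 n)).le)
      (P := Φ (xm c)) (fun n => hmono (μs n) c (haμ n) (lt_of_le_of_lt le_rfl hcb) (hμ1 n))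
    have hy' : y = xm ls := (hxm ls hlsa hlsb).2 y hymin
    rw [hy'] at hyr
    have hΦr : Φ (xm ls) = r := le_antisymm hyr hcase
    have hxmls := hxm ls hlsa hlsb
    refine ⟨xm ls, hΦr, ?_, ?_, ?_⟩
    · intro x hx
      have h1 := hxmls.1 x
      rw [hΦr, hx] at h1
      linarith
    · intro x hx hJ
      apply hxmls.2 x
      intro z
      have h1 := hxmls.1 z
      rw [hΦr] at h1
      rw [hx]
      linarith
    · intro u hu hJu
      apply conv (hcpt ls hlsa hlsb) hxmls.1 hxmls.2
      intro ε hε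
      have htend : Tendsto (fun n => J (u n) + ls * Φ (u n)) atTop
          (𝓝 (J (xm ls) + ls * Φ (xm ls))) := by
        have he : (fun n => J (u n) + ls * Φ (u n)) = fun n => J (u n) + ls * r :=
          funext fun n => by rw [hu n]
        rw [he, hΦr]
        exact hJu.add_const (ls * r)
      exact (htend.eventually_lt_const (by linarith)).mono fun n h => h.le
end

section
/- Under the hypotheses of the well-posedness theorem (α < β; for each λ ∈ ]a,b[, J + λΦ has sequentially compact sub-level sets and a unique global minimum), the functions r ↦ x̂_r and r ↦ J(x̂_r) are continuous on ]α,β[, where x̂_r is the unique global minimum of J on Φ⁻¹(r). -/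
/-!
For `l ∈ ]a,b[` let `m l` be the unique minimiser of `J + l Φ`. Comparing the minimality of `m l`
and `m l'` shows that `Φ ∘ m` is antitone, and the sequentially compact sublevel sets together with
uniqueness make `m`, `Φ ∘ m` and `J ∘ m` continuous. If `Φ (m l) = r` then `m l` is the constrained
minimiser `x̂_r`. For `r ∈ ]α,β[`, `Φ ∘ m` takes values on both sides of `r`: otherwise the
minimisers, as `l` tends to an endpoint of `]a,b[`, would produce a point of `M_a` (or `M_b`) on the
wrong side of `r`, or contradict `r < sup Φ` (or `inf Φ < r`) when that endpoint is infinite. By the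
intermediate value theorem `Φ ∘ m` maps a compact parameter set onto a neighbourhood of `r`, and
a continuous surjection from a compact space onto a Hausdorff one is a quotient map, so `x̂` and
`J ∘ x̂`, which become `m` and `J ∘ m` after composing with `Φ ∘ m`, are continuous at `r`.
-/

open Filter Topology Set

section SeqCompact

variable {X : Type*} [TopologicalSpace X] [T2Space X]

theorem IsSeqCompact.mem_of_tendsto_of_frequently {s : Set X} (hs : IsSeqCompact s)
    {y : ℕ → X} {p : X} (hy : Tendsto y atTop (𝓝 p)) (hmem : ∃ᶠ n in atTop, y n ∈ s) : p ∈ s := by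
  obtain ⟨q, hq, φ, hφ, hyφ⟩ := hs.subseq_of_frequently_in hmem
  rwa [tendsto_nhds_unique (hy.comp hφ.tendsto_atTop) hyφ]

variable {F G : X → ℝ}

theorem le_of_tendsto_of_isSeqCompact_sublevels (hF : ∀ C, IsSeqCompact {x | F x ≤ C})
    {y : ℕ → X} {w : X} (hy : Tendsto y atTop (𝓝 w)) {g : ℕ → ℝ} {c : ℝ}
    (hg : Tendsto g atTop (𝓝 c)) (hle : ∀ᶠ n in atTop, F (y n) ≤ g n) : F w ≤ c := by
  refine le_of_forall_gt_imp_ge_of_dense fun c' hc' => (hF c').mem_of_tendsto_of_frequently hy ?_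
  refine Eventually.frequently ?_
  filter_upwards [hle, hg.eventually (eventually_lt_nhds hc')] with n hn hgn
  exact hn.trans hgn.le

theorem tendsto_of_tendsto_apply_of_isSeqCompact_sublevels
    (hF : ∀ C, IsSeqCompact {x | F x ≤ C}) {x₀ : X} (hx₀ : ∀ x, F x ≤ F x₀ → x = x₀)
    {u : ℕ → X} (hu : Tendsto (F ∘ u) atTop (𝓝 (F x₀))) : Tendsto u atTop (𝓝 x₀) := by
  refine tendsto_of_subseq_tendsto fun ns hns => ?_
  have hFns : Tendsto (F ∘ u ∘ ns) atTop (𝓝 (F x₀)) := hu.comp hns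
  obtain ⟨w, -, φ, hφ, hw⟩ := (hF (F x₀ + 1)).subseq_of_frequently_in
    (hFns.eventually (eventually_le_nhds (lt_add_one _))).frequently
  obtain rfl : w = x₀ := hx₀ w <| le_of_tendsto_of_isSeqCompact_sublevels hF hw
    (hFns.comp hφ.tendsto_atTop) (Eventually.of_forall fun _ => le_rfl)
  exact ⟨φ, hw⟩

theorem eventually_lt_sub_of_tendsto (hG : ∀ C, IsSeqCompact {x | G x ≤ C}) {y : ℕ → X} {w : X}
    (hy : Tendsto y atTop (𝓝 w)) (hF : Tendsto (F ∘ y) atTop (𝓝 (F w))) {a : ℝ}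
    (ha : a < G w - F w) : ∀ᶠ n in atTop, a < G (y n) - F (y n) := by
  by_contra h
  obtain ⟨φ, hφ, hle⟩ := extraction_of_frequently_atTop (not_eventually.1 h)
  have := le_of_tendsto_of_isSeqCompact_sublevels hG (hy.comp hφ.tendsto_atTop)
    ((hF.comp hφ.tendsto_atTop).add_const a)
    (Eventually.of_forall fun n => by simp only [Function.comp_apply]; linarith [not_lt.1 (hle n)])
  linarith

end SeqCompact

section Lagrangian

variable {X : Type*} {J Φ : X → ℝ} {Λ : Set ℝ} {m : ℝ → X}

def IsLagrangeMin (J Φ : X → ℝ) (l : ℝ) (x : X) : Prop :=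
  ∀ z, J x + l * Φ x ≤ J z + l * Φ z

theorem isLagrangeMin_neg {l : ℝ} {x : X} :
    IsLagrangeMin J (-Φ) l x ↔ IsLagrangeMin J Φ (-l) x := by
  simp only [IsLagrangeMin, Pi.neg_apply, mul_neg, neg_mul]

theorem IsLagrangeMin.le_of_lt {l l' : ℝ} {x x' : X} (hx : IsLagrangeMin J Φ l x)
    (hx' : IsLagrangeMin J Φ l' x') (h : l < l') : Φ x' ≤ Φ x := by
  have := hx x'
  have := hx' x
  nlinarith

theorem IsLagrangeMin.le_of_phi_eq {l : ℝ} {x z : X} (hx : IsLagrangeMin J Φ l x)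
    (h : Φ z = Φ x) : J x ≤ J z := by
  linarith [h ▸ hx z]

theorem antitoneOn_isLagrangeMin (hm : ∀ l ∈ Λ, IsLagrangeMin J Φ l (m l)) :
    AntitoneOn (fun l => Φ (m l)) Λ := fun l hl l' hl' h =>
  h.eq_or_lt.elim (fun h => h ▸ le_rfl) ((hm l hl).le_of_lt (hm l' hl'))

theorem tendsto_lagrangian_isLagrangeMin (hm : ∀ l ∈ Λ, IsLagrangeMin J Φ l (m l)) {l : ℝ}
    (hl : Λ ∈ 𝓝 l) :
    Tendsto (fun t => J (m t) + l * Φ (m t)) (𝓝 l) (𝓝 (J (m l) + l * Φ (m l))) := by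
  obtain ⟨c, d, hcd, hnhds, hsub⟩ := exists_Icc_mem_subset_of_mem_nhds hl
  have hanti := antitoneOn_isLagrangeMin hm
  have hc : c ∈ Λ := hsub ⟨le_rfl, hcd.1.trans hcd.2⟩
  have hd : d ∈ Λ := hsub ⟨hcd.1.trans hcd.2, le_rfl⟩
  have hΦ : ∀ s ∈ Icc c d, Φ (m d) ≤ Φ (m s) ∧ Φ (m s) ≤ Φ (m c) := fun s hs =>
    ⟨hanti (hsub hs) hd hs.2, hanti hc (hsub hs) hs.1⟩
  have hbound : ∀ t ∈ Icc c d, J (m t) + l * Φ (m t) ≤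
      J (m l) + l * Φ (m l) + |t - l| * (Φ (m c) - Φ (m d)) := by
    intro t ht
    have hmin := hm t (hsub ht) (m l)
    have : (t - l) * (Φ (m l) - Φ (m t)) ≤ |t - l| * (Φ (m c) - Φ (m d)) := calc
      _ ≤ |t - l| * |Φ (m l) - Φ (m t)| := (le_abs_self _).trans (abs_mul _ _).le
      _ ≤ _ := mul_le_mul_of_nonneg_left (abs_sub_le_iff.2
          ⟨by linarith [hΦ l hcd, hΦ t ht], by linarith [hΦ l hcd, hΦ t ht]⟩) (abs_nonneg _)
    linarith
  have hlim : Tendsto (fun t => J (m l) + l * Φ (m l) + |t - l| * (Φ (m c) - Φ (m d)))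
      (𝓝 l) (𝓝 (J (m l) + l * Φ (m l))) := by
    have hcont : Continuous fun t => |t - l| * (Φ (m c) - Φ (m d)) := by fun_prop
    simpa using (hcont.tendsto l).const_add (J (m l) + l * Φ (m l))
  exact tendsto_of_tendsto_of_tendsto_of_le_of_le' tendsto_const_nhds hlim
    (Eventually.of_forall fun t => hm l (hsub hcd) (m t)) (eventually_of_mem hnhds hbound)

theorem le_of_forall_isLagrangeMin_le {l₀ r : ℝ} {x : ℝ → X}
    (hx : ∀ l < l₀, IsLagrangeMin J Φ l (x l)) (hr : ∀ l < l₀, Φ (x l) ≤ r) (z : X) :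
    Φ z ≤ r := by
  by_contra! hz
  obtain ⟨l₁, hl₁⟩ := exists_lt l₀
  have hest : ∀ l < l₁, J (x l₁) + l₁ * Φ (x l₁) - J z - l₁ * r ≤ l * (Φ z - r) := by
    intro l hl
    have h₁ := hx l₁ hl₁ (x l)
    have h₂ := hx l (hl.trans hl₁) z
    linarith [mul_le_mul_of_nonneg_left (hr l (hl.trans hl₁)) (sub_nonneg.2 hl.le)]
  obtain ⟨l, hl, hlt⟩ := ((eventually_lt_atBot l₁).and
    ((tendsto_id.atBot_mul_const (sub_pos.2 hz)).eventually
      (eventually_lt_atBot (J (x l₁) + l₁ * Φ (x l₁) - J z - l₁ * r)))).exists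
  exact (hest l hl).not_gt hlt

theorem le_of_forall_isLagrangeMin_ge {l₀ r : ℝ} {x : ℝ → X}
    (hx : ∀ l, l₀ < l → IsLagrangeMin J Φ l (x l)) (hr : ∀ l, l₀ < l → r ≤ Φ (x l)) (z : X) :
    r ≤ Φ z := by
  have := le_of_forall_isLagrangeMin_le (Φ := -Φ) (l₀ := -l₀) (r := -r) (x := fun l => x (-l))
    (fun l hl => isLagrangeMin_neg.2 (hx _ (by linarith))) (fun l hl => by
      simpa using hr _ (by linarith)) z
  simpa using this

variable [TopologicalSpace X] [T2Space X]

theorem exists_isLagrangeMin_le_of_forall_le {a' l₀ r : ℝ} (h : a' < l₀) {x : ℝ → X}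
    (hx : ∀ l ∈ Ioo a' l₀, IsLagrangeMin J Φ l (x l))
    (hK : ∀ l ∈ Ioo a' l₀, ∀ C, IsSeqCompact {y | J y + l * Φ y ≤ C})
    (hr : ∀ l ∈ Ioo a' l₀, Φ (x l) ≤ r) : ∃ w, IsLagrangeMin J Φ a' w ∧ Φ w ≤ r := by
  obtain ⟨μ, hμ⟩ := exists_between h
  obtain ⟨u, -, hu, hlim⟩ := exists_seq_strictAnti_tendsto' hμ.1
  have hu' : ∀ n, u n ∈ Ioo a' l₀ := fun n => ⟨(hu n).1, (hu n).2.trans hμ.2⟩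
  have hest : ∀ ν, ∀ l ∈ Ioo a' l₀, l ≤ ν → ∀ z,
      J (x l) + ν * Φ (x l) ≤ J z + l * Φ z + (ν - l) * r := by
    intro ν l hl hlν z
    nlinarith [hx l hl z, mul_le_mul_of_nonneg_left (hr l hl) (sub_nonneg.2 hlν)]
  -- `Φ (x μ) ≤ r` makes `hest` at `z = x μ` uniform in `l ∈ Ioo a' μ`
  obtain ⟨w, -, φ, hφ, hw⟩ := hK μ hμ (J (x μ) + μ * r + a' * (Φ (x μ) - r)) (x := x ∘ u)
    fun n => by
      simp only [Function.comp_apply, mem_ofPred_eq]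
      have := mul_le_mul_of_nonpos_right (hu n).1.le (sub_nonpos.2 (hr μ hμ))
      nlinarith [hest μ (u n) (hu' n) (hu n).2.le (x μ)]
  have hulim : Tendsto (u ∘ φ) atTop (𝓝 a') := hlim.comp hφ.tendsto_atTop
  have hineq : ∀ ν ∈ Ioo a' l₀, ∀ z, J w + ν * Φ w ≤ J z + a' * Φ z + (ν - a') * r := by
    intro ν hν z
    refine le_of_tendsto_of_isSeqCompact_sublevels (hK ν hν) hw
      (g := fun k => J z + u (φ k) * Φ z + (ν - u (φ k)) * r) ?_ ?_
    · exact ((hulim.mul_const _).const_add _).add ((hulim.const_sub ν).mul_const r)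
    · filter_upwards [hulim.eventually (eventually_le_nhds hν.1)] with k hk
      exact hest ν _ (hu' _) hk z
  have hle : Φ w ≤ r := by
    have := hineq μ hμ w
    exact le_of_mul_le_mul_left (by linarith) (sub_pos.2 hμ.1)
  refine ⟨w, fun z => ge_of_tendsto' (x := atTop)
    (f := fun n => J z + a' * Φ z + (u n - a') * (r - Φ w)) ?_
    fun n => by linarith [hineq (u n) (hu' n) z], hle⟩
  simpa using ((hlim.sub_const a').mul_const (r - Φ w)).const_add (J z + a' * Φ z)

theorem exists_isLagrangeMin_ge_of_forall_ge {l₀ b' r : ℝ} (h : l₀ < b') {x : ℝ → X}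
    (hx : ∀ l ∈ Ioo l₀ b', IsLagrangeMin J Φ l (x l))
    (hK : ∀ l ∈ Ioo l₀ b', ∀ C, IsSeqCompact {y | J y + l * Φ y ≤ C})
    (hr : ∀ l ∈ Ioo l₀ b', r ≤ Φ (x l)) : ∃ w, IsLagrangeMin J Φ b' w ∧ r ≤ Φ w := by
  have hneg : ∀ l ∈ Ioo (-b') (-l₀), -l ∈ Ioo l₀ b' := fun l hl =>
    ⟨by linarith [hl.2], by linarith [hl.1]⟩
  obtain ⟨w, hw, hwr⟩ := exists_isLagrangeMin_le_of_forall_le (Φ := -Φ) (r := -r)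
    (x := fun l => x (-l)) (neg_lt_neg h)
    (fun l hl => isLagrangeMin_neg.2 (hx _ (hneg l hl)))
    (fun l hl C => by simpa only [Pi.neg_apply, mul_neg, neg_mul] using hK _ (hneg l hl) C)
    (fun l hl => by simpa using hr _ (hneg l hl))
  exact ⟨w, by simpa using isLagrangeMin_neg.1 hw, by simpa using hwr⟩

theorem continuousAt_isLagrangeMin (hm : ∀ l ∈ Λ, IsLagrangeMin J Φ l (m l)) {l : ℝ}
    (huniq : ∀ x, IsLagrangeMin J Φ l x → x = m l)
    (hK : ∀ C, IsSeqCompact {x | J x + l * Φ x ≤ C}) (hl : Λ ∈ 𝓝 l) : ContinuousAt m l :=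
  tendsto_nhds_iff_seq_tendsto.2 fun _u hu =>
    tendsto_of_tendsto_apply_of_isSeqCompact_sublevels hK
      (fun x hx => huniq x fun z => hx.trans (hm l (mem_of_mem_nhds hl) z))
      ((tendsto_lagrangian_isLagrangeMin hm hl).comp hu)

theorem continuousAt_phi_isLagrangeMin (hm : ∀ l ∈ Λ, IsLagrangeMin J Φ l (m l))
    (huniq : ∀ l ∈ Λ, ∀ x, IsLagrangeMin J Φ l x → x = m l)
    (hK : ∀ l ∈ Λ, ∀ C, IsSeqCompact {x | J x + l * Φ x ≤ C}) {l : ℝ} (hl : Λ ∈ 𝓝 l) :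
    ContinuousAt (fun t => Φ (m t)) l := by
  obtain ⟨c, d, hcd, hsub⟩ := mem_nhds_iff_exists_Ioo_subset.1 hl
  obtain ⟨c', hc'⟩ := exists_between hcd.1
  obtain ⟨d', hd'⟩ := exists_between hcd.2
  have hlΛ := mem_of_mem_nhds hl
  refine tendsto_nhds_iff_seq_tendsto.2 fun u hu => ?_
  have hy := (continuousAt_isLagrangeMin hm (huniq l hlΛ) (hK l hlΛ) hl).tendsto.comp hu
  have hF := (tendsto_lagrangian_isLagrangeMin hm hl).comp hu
  -- `Φ` need not be continuous: since `J + l Φ` converges along `m ∘ u`, the lower semicontinuity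
  -- of `J + d' Φ` (resp. `J + c' Φ`) there bounds `Φ ∘ m ∘ u` from below (resp. above)
  refine tendsto_order.2 ⟨fun a ha => ?_, fun a ha => ?_⟩
  · have := eventually_lt_sub_of_tendsto (hK d' (hsub ⟨hcd.1.trans hd'.1, hd'.2⟩)) hy
      (F := fun x => J x + l * Φ x) hF (a := (d' - l) * a) (by nlinarith [hd'.1])
    filter_upwards [this] with n hn
    simp only [Function.comp_apply] at hn ⊢
    nlinarith [hd'.1]
  · have := eventually_lt_sub_of_tendsto (hK c' (hsub ⟨hc'.1, hc'.2.trans hcd.2⟩)) hy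
      (F := fun x => J x + l * Φ x) hF (a := (c' - l) * a) (by nlinarith [hc'.2])
    filter_upwards [this] with n hn
    simp only [Function.comp_apply] at hn ⊢
    nlinarith [hc'.2]

theorem continuousOn_isLagrangeMin (hΛ : IsOpen Λ) (hm : ∀ l ∈ Λ, IsLagrangeMin J Φ l (m l))
    (huniq : ∀ l ∈ Λ, ∀ x, IsLagrangeMin J Φ l x → x = m l)
    (hK : ∀ l ∈ Λ, ∀ C, IsSeqCompact {x | J x + l * Φ x ≤ C}) :
    ContinuousOn m Λ ∧ ContinuousOn (fun t => Φ (m t)) Λ ∧ ContinuousOn (fun t => J (m t)) Λ := by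
  have hΦ : ContinuousOn (fun t => Φ (m t)) Λ := continuousOn_of_forall_continuousAt
    fun l hl => continuousAt_phi_isLagrangeMin hm huniq hK (hΛ.mem_nhds hl)
  refine ⟨continuousOn_of_forall_continuousAt fun l hl =>
    continuousAt_isLagrangeMin hm (huniq l hl) (hK l hl) (hΛ.mem_nhds hl), hΦ,
    continuousOn_of_forall_continuousAt fun l hl => ?_⟩
  show Tendsto _ _ _
  simpa using (tendsto_lagrangian_isLagrangeMin hm (hΛ.mem_nhds hl)).sub
    ((hΦ.continuousAt (hΛ.mem_nhds hl)).const_mul l)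

theorem exists_lt_phi_isLagrangeMin {a b : EReal} (hab : a < b)
    (hm : ∀ l : ℝ, (l : EReal) ∈ Ioo a b → IsLagrangeMin J Φ l (m l))
    (hK : ∀ l : ℝ, (l : EReal) ∈ Ioo a b → ∀ C, IsSeqCompact {x | J x + l * Φ x ≤ C}) {r : ℝ}
    (hr : (r : EReal) < min (⨆ x, (Φ x : EReal))
      (⨅ x : {x | ∃ a' : ℝ, a = a' ∧ IsLagrangeMin J Φ a' x}, (Φ x.1 : EReal))) :
    ∃ l : ℝ, (l : EReal) ∈ Ioo a b ∧ r < Φ (m l) := by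
  by_contra! h
  obtain ⟨l₀, hal₀, hl₀b⟩ := EReal.exists_between_coe_real hab
  induction a using EReal.rec with
  | bot =>
    have hmem : ∀ l < l₀, ((l : ℝ) : EReal) ∈ Ioo ⊥ b := fun l hl =>
      ⟨EReal.bot_lt_coe l, (EReal.coe_lt_coe_iff.2 hl).trans hl₀b⟩
    have hle := le_of_forall_isLagrangeMin_le (fun l hl => hm l (hmem l hl))
      (fun l hl => h l (hmem l hl))
    exact hr.not_ge <| (min_le_left _ _).trans (iSup_le fun z => EReal.coe_le_coe_iff.2 (hle z))
  | coe a' =>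
    have hmem : ∀ l ∈ Ioo a' l₀, ((l : ℝ) : EReal) ∈ Ioo (a' : EReal) b := fun l hl =>
      ⟨EReal.coe_lt_coe_iff.2 hl.1, (EReal.coe_lt_coe_iff.2 hl.2).trans hl₀b⟩
    obtain ⟨w, hw, hwr⟩ := exists_isLagrangeMin_le_of_forall_le (EReal.coe_lt_coe_iff.1 hal₀)
      (fun l hl => hm l (hmem l hl)) (fun l hl => hK l (hmem l hl)) (fun l hl => h l (hmem l hl))
    exact hr.not_ge <| (min_le_right _ _).trans <|
      (iInf_le _ ⟨w, a', rfl, hw⟩).trans (EReal.coe_le_coe_iff.2 hwr)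
  | top => exact absurd hab not_top_lt

theorem exists_phi_isLagrangeMin_lt {a b : EReal} (hab : a < b)
    (hm : ∀ l : ℝ, (l : EReal) ∈ Ioo a b → IsLagrangeMin J Φ l (m l))
    (hK : ∀ l : ℝ, (l : EReal) ∈ Ioo a b → ∀ C, IsSeqCompact {x | J x + l * Φ x ≤ C}) {r : ℝ}
    (hr : max (⨅ x, (Φ x : EReal))
      (⨆ x : {x | ∃ b' : ℝ, b = b' ∧ IsLagrangeMin J Φ b' x}, (Φ x.1 : EReal)) < r) :
    ∃ l : ℝ, (l : EReal) ∈ Ioo a b ∧ Φ (m l) < r := by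
  by_contra! h
  obtain ⟨l₀, hal₀, hl₀b⟩ := EReal.exists_between_coe_real hab
  induction b using EReal.rec with
  | bot => exact absurd hab not_lt_bot
  | coe b' =>
    have hmem : ∀ l ∈ Ioo l₀ b', ((l : ℝ) : EReal) ∈ Ioo a (b' : EReal) := fun l hl =>
      ⟨hal₀.trans (EReal.coe_lt_coe_iff.2 hl.1), EReal.coe_lt_coe_iff.2 hl.2⟩
    obtain ⟨w, hw, hwr⟩ := exists_isLagrangeMin_ge_of_forall_ge (EReal.coe_lt_coe_iff.1 hl₀b)
      (fun l hl => hm l (hmem l hl)) (fun l hl => hK l (hmem l hl)) (fun l hl => h l (hmem l hl))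
    exact hr.not_ge <| (EReal.coe_le_coe_iff.2 hwr).trans <|
      le_max_of_le_right (le_iSup_of_le ⟨w, b', rfl, hw⟩ le_rfl)
  | top =>
    have hmem : ∀ l, l₀ < l → ((l : ℝ) : EReal) ∈ Ioo a ⊤ := fun l hl =>
      ⟨hal₀.trans (EReal.coe_lt_coe_iff.2 hl), EReal.coe_lt_top l⟩
    have hle := le_of_forall_isLagrangeMin_ge (fun l hl => hm l (hmem l hl))
      (fun l hl => h l (hmem l hl))
    exact hr.not_ge <| (le_iInf fun z => EReal.coe_le_coe_iff.2 (hle z)).trans (le_max_left _ _)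

end Lagrangian

theorem IsCompact.continuousOn_image_of_comp {α β γ : Type*} [TopologicalSpace α]
    [TopologicalSpace β] [T2Space β] [TopologicalSpace γ] {K : Set α} (hK : IsCompact K)
    {f : α → β} {h : β → γ} (hf : ContinuousOn f K) (hhf : ContinuousOn (h ∘ f) K) :
    ContinuousOn h (f '' K) := by
  have : CompactSpace K := isCompact_iff_compactSpace.1 hK
  have hF : Continuous (K.imageFactorization f) := hf.domRestrict.subtype_mk _
  have hq := hF.isClosedMap.isQuotientMap hF imageFactorization_surjective
  rw [continuousOn_iff_continuous_domRestrict, hq.continuous_iff]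
  exact hhf.domRestrict

theorem continuousAt_of_comp_eqOn {Y : Type*} [TopologicalSpace Y] {f : ℝ → ℝ}
    {g h : ℝ → Y} {l₁ l₂ p q r : ℝ} (hf : ContinuousOn f (uIcc l₁ l₂))
    (hg : ContinuousOn g (uIcc l₁ l₂)) (hhf : EqOn (h ∘ f) g (uIcc l₁ l₂ ∩ f ⁻¹' Icc p q))
    (hp : p < r) (hq : r < q) (h₁ : q ≤ f l₁) (h₂ : f l₂ ≤ p) : ContinuousAt h r := by
  have hK : IsCompact (uIcc l₁ l₂ ∩ f ⁻¹' Icc p q) := isCompact_uIcc.of_isClosed_subset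
    (hf.preimage_isClosed_of_isClosed isClosed_Icc isClosed_Icc) inter_subset_left
  have himage : Icc p q ⊆ f '' (uIcc l₁ l₂ ∩ f ⁻¹' Icc p q) := by
    intro y hy
    obtain ⟨t, ht, rfl⟩ :=
      intermediate_value_uIcc hf (Icc_subset_uIcc' ⟨h₂.trans hy.1, hy.2.trans h₁⟩)
    exact ⟨t, ⟨ht, hy⟩, rfl⟩
  exact ((hK.continuousOn_image_of_comp (hf.mono inter_subset_left)
    ((hg.mono inter_subset_left).congr hhf)).mono himage).continuousAt (Icc_mem_nhds hp hq)

theorem stmt_15_general {X : Type*} [TopologicalSpace X] [T2Space X] [Nonempty X]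
    (J Φ : X → ℝ) (a b : EReal) (hab : a < b)
    (Ma Mb : Set X)
    (hMa : Ma = {x : X | ∃ a' : ℝ, a = (a' : EReal) ∧
      ∀ z : X, J x + a' * Φ x ≤ J z + a' * Φ z})
    (hMb : Mb = {x : X | ∃ b' : ℝ, b = (b' : EReal) ∧
      ∀ z : X, J x + b' * Φ x ≤ J z + b' * Φ z})
    (alpha beta : EReal)
    (halpha : alpha = max (⨅ x : X, (Φ x : EReal)) (⨆ x : Mb, (Φ x.1 : EReal)))
    (hbeta : beta = min (⨆ x : X, (Φ x : EReal)) (⨅ x : Ma, (Φ x.1 : EReal)))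
    (hcpt : ∀ l : ℝ, a < (l : EReal) → (l : EReal) < b →
      ∀ r : ℝ, IsSeqCompact {x : X | J x + l * Φ x ≤ r})
    (hmin : ∀ l : ℝ, a < (l : EReal) → (l : EReal) < b →
      ∃! x : X, ∀ z : X, J x + l * Φ x ≤ J z + l * Φ z)
    (xh : ℝ → X)
    (hxh : ∀ r : ℝ, alpha < (r : EReal) → (r : EReal) < beta →
      Φ (xh r) = r ∧ (∀ x : X, Φ x = r → J (xh r) ≤ J x) ∧
        (∀ x : X, Φ x = r → J x ≤ J (xh r) → x = xh r)) :
    ContinuousOn xh {r : ℝ | alpha < (r : EReal) ∧ (r : EReal) < beta} ∧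
      ContinuousOn (fun r => J (xh r)) {r : ℝ | alpha < (r : EReal) ∧ (r : EReal) < beta} := by
  subst hMa hMb
  set Λ : Set ℝ := ((↑) : ℝ → EReal) ⁻¹' Ioo a b
  have hK : ∀ l ∈ Λ, ∀ C, IsSeqCompact {x | J x + l * Φ x ≤ C} := fun l hl => hcpt l hl.1 hl.2
  choose! m hm huniq using fun l (hl : l ∈ Λ) => hmin l hl.1 hl.2
  obtain ⟨hmc, hΦc, hJc⟩ := continuousOn_isLagrangeMin
    (isOpen_Ioo.preimage continuous_coe_real_ereal) hm huniq hK
  suffices ∀ r₀ : ℝ, alpha < r₀ → r₀ < beta →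
      ContinuousAt xh r₀ ∧ ContinuousAt (fun r => J (xh r)) r₀ from
    ⟨fun r hr => (this r hr.1 hr.2).1.continuousWithinAt,
      fun r hr => (this r hr.1 hr.2).2.continuousWithinAt⟩
  intro r₀ hαr hrβ
  obtain ⟨p, hαp, hpr⟩ := EReal.exists_between_coe_real hαr
  obtain ⟨q, hrq, hqβ⟩ := EReal.exists_between_coe_real hrβ
  obtain ⟨l₁, hl₁, hql₁⟩ := exists_lt_phi_isLagrangeMin hab hm hK (hbeta ▸ hqβ)
  obtain ⟨l₂, hl₂, hl₂p⟩ := exists_phi_isLagrangeMin_lt hab hm hK (halpha ▸ hαp)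
  have hsub : uIcc l₁ l₂ ⊆ Λ :=
    (ordConnected_Ioo.preimage_mono EReal.coe_strictMono.monotone).uIcc_subset hl₁ hl₂
  have hident : EqOn (xh ∘ fun t => Φ (m t)) m (uIcc l₁ l₂ ∩ (fun t => Φ (m t)) ⁻¹' Icc p q) := by
    rintro t ⟨ht, hpt, htq⟩
    obtain ⟨hΦ, -, hxh_uniq⟩ := hxh (Φ (m t)) (hαp.trans_le (EReal.coe_le_coe_iff.2 hpt))
      ((EReal.coe_le_coe_iff.2 htq).trans_lt hqβ)
    exact (hxh_uniq (m t) rfl (IsLagrangeMin.le_of_phi_eq (hm t (hsub ht)) hΦ)).symm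
  have hpr' := EReal.coe_lt_coe_iff.1 hpr
  have hrq' := EReal.coe_lt_coe_iff.1 hrq
  exact ⟨continuousAt_of_comp_eqOn (hΦc.mono hsub) (hmc.mono hsub) hident hpr' hrq' hql₁.le hl₂p.le,
    continuousAt_of_comp_eqOn (hΦc.mono hsub) (hJc.mono hsub) (fun t ht => congrArg J (hident ht))
      hpr' hrq' hql₁.le hl₂p.le⟩

/-- Theorem 1 (continuous dependence): under the hypotheses of the well-posedness
theorem, the maps `r ↦ x̂_r` and `r ↦ J (x̂_r)` are continuous on `]α,β[`, where
`x̂_r` is the unique global minimum of `J` on `Φ⁻¹(r)`. -/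
theorem stmt_15 {X : Type*} [TopologicalSpace X] [T2Space X] [Nonempty X]
    (J Φ : X → ℝ) (a b : EReal) (hab : a < b)
    (Ma Mb : Set X)
    (hMa : Ma = {x : X | ∃ a' : ℝ, a = (a' : EReal) ∧
      ∀ z : X, J x + a' * Φ x ≤ J z + a' * Φ z})
    (hMb : Mb = {x : X | ∃ b' : ℝ, b = (b' : EReal) ∧
      ∀ z : X, J x + b' * Φ x ≤ J z + b' * Φ z})
    (alpha beta : EReal)
    (halpha : alpha = max (⨅ x : X, (Φ x : EReal)) (⨆ x : Mb, (Φ x.1 : EReal)))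
    (hbeta : beta = min (⨆ x : X, (Φ x : EReal)) (⨅ x : Ma, (Φ x.1 : EReal)))
    (hαβ : alpha < beta)
    (hcpt : ∀ l : ℝ, a < (l : EReal) → (l : EReal) < b →
      ∀ r : ℝ, IsSeqCompact {x : X | J x + l * Φ x ≤ r})
    (hmin : ∀ l : ℝ, a < (l : EReal) → (l : EReal) < b →
      ∃! x : X, ∀ z : X, J x + l * Φ x ≤ J z + l * Φ z)
    (xh : ℝ → X)
    (hxh : ∀ r : ℝ, alpha < (r : EReal) → (r : EReal) < beta →
      Φ (xh r) = r ∧ (∀ x : X, Φ x = r → J (xh r) ≤ J x) ∧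
        (∀ x : X, Φ x = r → J x ≤ J (xh r) → x = xh r)) :
    ContinuousOn xh {r : ℝ | alpha < (r : EReal) ∧ (r : EReal) < beta} ∧
      ContinuousOn (fun r => J (xh r)) {r : ℝ | alpha < (r : EReal) ∧ (r : EReal) < beta} :=
  stmt_15_general J Φ a b hab Ma Mb hMa hMb alpha beta halpha hbeta hcpt hmin xh hxh
end

section
/- Assume b > 0 and that for each λ ∈ ]0,b[ the function J + λΦ has sequentially compact sub-level sets and a unique global minimum ŷ_λ, and that lim_{λ→0⁺} Φ(ŷ_λ) < sup_X Φ. Then lim_{λ→0⁺} Φ(ŷ_λ) = inf_M Φ, where M is the set of all global minima of J on X. -/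
open Filter Topology

set_option maxHeartbeats 1000000 in
/-- Theorem 6: if `b > 0`, for each `λ ∈ ]0,b[` the function `J + λΦ` has sequentially
compact sub-level sets and a unique global minimum `y λ`, and
`lim_{λ→0⁺} Φ (y λ) < sup_X Φ`, then `lim_{λ→0⁺} Φ (y λ) = inf_M Φ`, where `M` is the
set of global minima of `J`. -/
theorem stmt_19 {X : Type*} [TopologicalSpace X] [T2Space X] [Nonempty X]
    (J Φ : X → ℝ) (b : EReal) (hb : 0 < b) (y : ℝ → X)
    (hcpt : ∀ l : ℝ, 0 < l → (l : EReal) < b →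
      ∀ r : ℝ, IsSeqCompact {x : X | J x + l * Φ x ≤ r})
    (hmin : ∀ l : ℝ, 0 < l → (l : EReal) < b →
      ∀ x : X, J (y l) + l * Φ (y l) ≤ J x + l * Φ x)
    (huniq : ∀ l : ℝ, 0 < l → (l : EReal) < b →
      ∀ x : X, (∀ z : X, J x + l * Φ x ≤ J z + l * Φ z) → x = y l)
    (L : EReal)
    (hlim : Tendsto (fun l : ℝ => ((Φ (y l) : ℝ) : EReal))
      (𝓝[{l : ℝ | 0 < l ∧ (l : EReal) < b}] 0) (𝓝 L))
    (hL : L < ⨆ x : X, (Φ x : EReal)) :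
    L = ⨅ x : {x : X // ∀ z : X, J x ≤ J z}, (Φ x.1 : EReal) := by
  classical
  set S : Set ℝ := {l : ℝ | 0 < l ∧ (l : EReal) < b} with hSdef
  -- choose a real ε with 0 < ε and (ε : EReal) < b
  obtain ⟨c, hc0, hcb⟩ := exists_between hb
  have hctop : c ≠ ⊤ := (hcb.trans_le le_top).ne
  have hcbot : c ≠ ⊥ := ((EReal.bot_lt_zero).trans hc0).ne'
  set ε : ℝ := c.toReal with hεdef
  have hεc : (ε : EReal) = c := EReal.coe_toReal hctop hcbot
  have hε0 : 0 < ε := by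
    have h := hc0; rw [← hεc] at h; exact_mod_cast h
  have hεS : ∀ l : ℝ, 0 < l → l ≤ ε → l ∈ S := by
    intro l hl hle
    refine ⟨hl, lt_of_le_of_lt ?_ hcb⟩
    rw [← hεc]; exact_mod_cast hle
  have hεmem : ε ∈ S := hεS ε hε0 le_rfl
  -- monotonicity of Φ (y ·)
  have hmono : ∀ l μ : ℝ, l ∈ S → μ ∈ S → l ≤ μ → Φ (y μ) ≤ Φ (y l) := by
    intro l μ hl hμ hlμ
    rcases eq_or_lt_of_le hlμ with rfl | hlt
    · exact le_rfl
    · have h1 := hmin l hl.1 hl.2 (y μ)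
      have h2 := hmin μ hμ.1 hμ.2 (y l)
      nlinarith [h1, h2, sub_pos.mpr hlt]
  -- the sequence λ k = ε / (k+1)
  set lam : ℕ → ℝ := fun k => ε / (k + 1) with hlamdef
  have hlam_pos : ∀ k, 0 < lam k := by
    intro k; positivity
  have hlam_le : ∀ k, lam k ≤ ε := by
    intro k
    have h1 : (1 : ℝ) ≤ (k : ℝ) + 1 := by
      have := Nat.cast_nonneg (α := ℝ) k
      linarith
    calc lam k = ε / (k + 1) := rfl
    _ ≤ ε / 1 := by
        apply div_le_div_of_nonneg_left hε0.le one_pos h1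
    _ = ε := by ring
  have hlamS : ∀ k, lam k ∈ S := fun k => hεS _ (hlam_pos k) (hlam_le k)
  have hlam0 : Tendsto lam atTop (𝓝 0) := by
    have h := tendsto_one_div_add_atTop_nhds_zero_nat.const_mul ε
    simp only [mul_zero] at h
    convert h using 2 with k
    show ε / ((k : ℝ) + 1) = ε * (1 / ((k : ℝ) + 1))
    ring
  have hfil : Tendsto lam atTop (𝓝[S] 0) :=
    tendsto_nhdsWithin_of_tendsto_nhds_of_eventually_within lam hlam0
      (Eventually.of_forall hlamS)
  haveI hNB : (𝓝[S] (0 : ℝ)).NeBot := neBot_of_le hfil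
  -- L is finite
  have hLbot : L ≠ ⊥ := by
    have hev : ∀ᶠ l in 𝓝[S] (0 : ℝ), ((Φ (y ε) : ℝ) : EReal) ≤ ((Φ (y l) : ℝ) : EReal) := by
      have h1 : ∀ᶠ l in 𝓝[S] (0 : ℝ), l ∈ S := eventually_mem_nhdsWithin
      have h2 : ∀ᶠ l in 𝓝[S] (0 : ℝ), l < ε :=
        eventually_nhdsWithin_of_eventually_nhds (eventually_lt_nhds hε0)
      filter_upwards [h1, h2] with l hlS hlε
      exact_mod_cast hmono l ε hlS hεmem hlε.le
    have h := ge_of_tendsto hlim hev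
    intro hbot
    rw [hbot] at h
    exact (not_le.mpr (EReal.bot_lt_coe _)) h
  have hLtop : L ≠ ⊤ := (hL.trans_le le_top).ne
  set ℓ : ℝ := L.toReal with hldef
  have hℓL : (ℓ : EReal) = L := EReal.coe_toReal hLtop hLbot
  -- Φ (y (lam k)) → ℓ in ℝ
  have hphiE : Tendsto (fun k => ((Φ (y (lam k)) : ℝ) : EReal)) atTop (𝓝 L) := hlim.comp hfil
  rw [← hℓL] at hphiE
  have hphi : Tendsto (fun k => Φ (y (lam k))) atTop (𝓝 ℓ) := EReal.tendsto_coe.mp hphiE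
  -- a uniform upper bound on Φ (y (lam k))
  obtain ⟨C0, hC0⟩ := hphi.bddAbove_range
  set C : ℝ := max C0 0 with hCdef
  have hCk : ∀ k, Φ (y (lam k)) ≤ C := fun k =>
    le_trans (hC0 ⟨k, rfl⟩) (le_max_left _ _)
  have hCnn : (0 : ℝ) ≤ C := le_max_right _ _
  -- containment in a sublevel set of J + ε Φ
  obtain ⟨z0⟩ := ‹Nonempty X›
  set r : ℝ := J z0 + ε * |Φ z0| + ε * C with hrdef
  have hsub : ∀ k, y (lam k) ∈ {x : X | J x + ε * Φ x ≤ r} := by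
    intro k
    have h := hmin (lam k) (hlam_pos k) (hlamS k).2 z0
    have h1 : lam k * Φ z0 ≤ ε * |Φ z0| := by
      rcases abs_cases (Φ z0) with ⟨he, h0⟩ | ⟨he, h0⟩ <;>
        nlinarith [hlam_pos k, hlam_le k]
    have h2 : (ε - lam k) * Φ (y (lam k)) ≤ (ε - lam k) * C :=
      mul_le_mul_of_nonneg_left (hCk k) (by linarith [hlam_le k])
    have h3 : (ε - lam k) * C ≤ ε * C := by nlinarith [hlam_pos k, hCnn]
    have hring : ε * Φ (y (lam k)) =
        lam k * Φ (y (lam k)) + (ε - lam k) * Φ (y (lam k)) := by ring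
    show J (y (lam k)) + ε * Φ (y (lam k)) ≤ r
    rw [hring]
    linarith [h, h1, h2, h3]
  -- extract a convergent subsequence
  obtain ⟨p, hpmem, σ, hσmono, hσtend⟩ := hcpt ε hε0 hεmem.2 r hsub
  set u : ℕ → X := fun k => y (lam (σ k)) with hudef
  have hu : Tendsto u atTop (𝓝 p) := hσtend
  have hlam' : Tendsto (fun k => lam (σ k)) atTop (𝓝 0) := hlam0.comp hσmono.tendsto_atTop
  have hphi' : Tendsto (fun k => Φ (u k)) atTop (𝓝 ℓ) := hphi.comp hσmono.tendsto_atTop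
  -- sequential closedness from sequential compactness
  have hclosed : ∀ μ, μ ∈ S → ∀ s : ℝ,
      (∀ᶠ k in atTop, J (u k) + μ * Φ (u k) ≤ s) → J p + μ * Φ p ≤ s := by
    intro μ hμ s hev
    obtain ⟨N, hN⟩ := eventually_atTop.mp hev
    have hmemset : ∀ k : ℕ, u (k + N) ∈ {x : X | J x + μ * Φ x ≤ s} := fun k =>
      hN (k + N) (Nat.le_add_left N k)
    obtain ⟨q, hq, τ, hτ, hτtend⟩ := hcpt μ hμ.1 hμ.2 s hmemset
    have hg : Tendsto (fun k => τ k + N) atTop atTop :=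
      tendsto_atTop_mono (fun k => Nat.le_add_right (τ k) N) hτ.tendsto_atTop
    have h2 : Tendsto (fun k => u (τ k + N)) atTop (𝓝 p) := hu.comp hg
    have h3 : Tendsto (fun k => u (τ k + N)) atTop (𝓝 q) := hτtend
    have : q = p := tendsto_nhds_unique h3 h2
    rw [← this]
    exact hq
  -- key inequality
  have hkey : ∀ μ, μ ∈ S → ∀ z : X, J p + μ * Φ p ≤ J z + μ * ℓ := by
    intro μ hμ z
    refine le_of_forall_pos_le_add ?_
    intro δ hδ
    apply hclosed μ hμ
    have hg : Tendsto (fun k => J z + lam (σ k) * Φ z + (μ - lam (σ k)) * Φ (u k)) atTop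
        (𝓝 (J z + 0 * Φ z + (μ - 0) * ℓ)) := by
      exact (tendsto_const_nhds.add (hlam'.mul tendsto_const_nhds)).add
        ((tendsto_const_nhds.sub hlam').mul hphi')
    have hlt : J z + 0 * Φ z + (μ - 0) * ℓ < J z + μ * ℓ + δ := by
      simp only [zero_mul, add_zero, sub_zero]; linarith
    have hev2 := hg.eventually (eventually_lt_nhds hlt)
    filter_upwards [hev2] with k hk
    have hm := hmin (lam (σ k)) (hlam_pos (σ k)) (hlamS (σ k)).2 z
    have hring : μ * Φ (u k) =
        lam (σ k) * Φ (u k) + (μ - lam (σ k)) * Φ (u k) := by ring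
    show J (u k) + μ * Φ (u k) ≤ J z + μ * ℓ + δ
    rw [hring]
    have hm' : J (u k) + lam (σ k) * Φ (u k) ≤ J z + lam (σ k) * Φ z := hm
    linarith [hm', hk.le]
  -- Φ p ≤ ℓ
  have hpphi : Φ p ≤ ℓ := by
    have h := hkey ε hεmem p
    nlinarith [hε0]
  -- p is a global minimum of J
  have hpM : ∀ z : X, J p ≤ J z := by
    intro z
    refine le_of_forall_pos_le_add ?_
    intro δ hδ
    have hbound : ∀ i, J p ≤ J z + lam i * (ℓ - Φ p) := by
      intro i
      have h := hkey (lam i) (hlamS i) z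
      have hring : lam i * (ℓ - Φ p) = lam i * ℓ - lam i * Φ p := by ring
      linarith [h, hring.ge, hring.le]
    have ht : Tendsto (fun i => lam i * (ℓ - Φ p)) atTop (𝓝 0) := by
      simpa using hlam0.mul_const (ℓ - Φ p)
    obtain ⟨i, hi⟩ := (ht.eventually (eventually_lt_nhds hδ)).exists
    linarith [hbound i, hi]
  -- ℓ ≤ Φ x for every global minimum x of J
  have hlower : ∀ x : X, (∀ z : X, J x ≤ J z) → ℓ ≤ Φ x := by
    intro x hx
    have hb' : ∀ k, Φ (y (lam k)) ≤ Φ x := by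
      intro k
      have h1 := hmin (lam k) (hlam_pos k) (hlamS k).2 x
      have h2 := hx (y (lam k))
      nlinarith [hlam_pos k]
    exact le_of_tendsto hphi (Eventually.of_forall hb')
  -- conclusion
  rw [← hℓL]
  apply le_antisymm
  · exact le_iInf fun x => EReal.coe_le_coe_iff.mpr (hlower x.1 x.2)
  · exact iInf_le_of_le ⟨p, hpM⟩ (EReal.coe_le_coe_iff.mpr hpphi)
end
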